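/- arXiv:1602.01820 — 7 statements merged into one kernel-verified Lean document; each statement's English description precedes it below -/
import Mathlib

section
/- For every integer N ≥ 1 there exists a family of real coefficients Ω(N, r; α₀, …, α_r), indexed by integers 0 ≤ r ≤ N and tuples of nonnegative integers (α₀, …, α_r) with α₀ + ⋯ + α_r = N − r, satisfying |Ω(N, r; α₀, …, α_r)| ≤ 3^N (N+1)!, such that the following identity holds: for every open set U ⊆ ℝ³, every smooth real-valued Φ on U with ∂₁Φ nonvanishing on U, and every smooth h : U → ℂ, one has (D′)^N h = Σ_{r=0}^{N} Σ_{α₀+⋯+α_r = N−r} Ω(N, r; α₀, …, α_r) · ∂₁^{α₀} h · (∂₁^{α₁+2}Φ ⋯ ∂₁^{α_r+2}Φ) / (∂₁Φ)^{r+N}, where D′ is the operator D′u := −∂₁(u / ∂₁Φ). -/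
noncomputable section

abbrev E3 : Type := EuclideanSpace ℝ (Fin 3)

/-- The partial derivative `∂₁` acting on complex-valued functions on `ℝ³`. -/
noncomputable def pd1C (f : E3 → ℂ) : E3 → ℂ :=
  fun x => fderiv ℝ f x (EuclideanSpace.single 0 1)

/-- The partial derivative `∂₁` acting on real-valued functions on `ℝ³`. -/
noncomputable def pd1R (f : E3 → ℝ) : E3 → ℝ :=
  fun x => fderiv ℝ f x (EuclideanSpace.single 0 1)

/-- The operator `D′u := −∂₁(u / ∂₁Φ)`, the formal adjoint of `Du = ∂₁u/∂₁Φ`. -/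
noncomputable def Dadj (Φ : E3 → ℝ) (u : E3 → ℂ) : E3 → ℂ :=
  fun x => -(pd1C (fun y => u y / ((pd1R Φ y : ℝ) : ℂ)) x)

/-!
Applying `D′` to a term `∂₁^{α₀}h · ∏_q ∂₁^{α_q+2}Φ / (∂₁Φ)^{r+m}` gives, by the Leibniz and
quotient rules, minus the sum of the `r + 1` terms in which one factor is differentiated once more,
plus `r + m + 1` times the term with one extra factor `∂₁²Φ`, produced by the denominator. Hence
each coefficient of `(D′)^{N+1} h` is a signed sum of `r + 1` coefficients of `(D′)^N h` and one
more weighted by `r + N`; as only `r ≤ N + 1` occurs, the bound grows by a factor at most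
`3 (N + 2)`, which gives `3^N (N+1)!`.
-/

open Finset Function

section Calculus

variable {x : E3}

lemma contDiffOn_pd1C {U : Set E3} (hU : IsOpen U) {f : E3 → ℂ}
    (hf : ContDiffOn ℝ (⊤ : ℕ∞) f U) : ContDiffOn ℝ (⊤ : ℕ∞) (pd1C f) U :=
  (hf.fderiv_of_isOpen hU (by simp)).clm_apply contDiffOn_const

lemma contDiffOn_pd1R {U : Set E3} (hU : IsOpen U) {f : E3 → ℝ}
    (hf : ContDiffOn ℝ (⊤ : ℕ∞) f U) : ContDiffOn ℝ (⊤ : ℕ∞) (pd1R f) U :=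
  (hf.fderiv_of_isOpen hU (by simp)).clm_apply contDiffOn_const

lemma pd1C_ofReal {g : E3 → ℝ} (hg : DifferentiableAt ℝ g x) :
    pd1C (fun y => (g y : ℂ)) x = pd1R g x := by
  have hcomp : (fun y => (g y : ℂ)) = Complex.ofRealCLM ∘ g := rfl
  simp [pd1C, pd1R, hcomp, fderiv_comp x Complex.ofRealCLM.differentiableAt hg]

lemma pd1C_sum {ι : Type*} {s : Finset ι} {f : ι → E3 → ℂ}
    (hf : ∀ i ∈ s, DifferentiableAt ℝ (f i) x) :
    pd1C (fun y => ∑ i ∈ s, f i y) x = ∑ i ∈ s, pd1C (f i) x := by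
  simp [pd1C, fderiv_fun_sum hf]

lemma pd1C_const_mul {f : E3 → ℂ} (c : ℂ) (hf : DifferentiableAt ℝ f x) :
    pd1C (fun y => c * f y) x = c * pd1C f x := by
  simp [pd1C, fderiv_const_mul hf]

lemma pd1C_prod {ι : Type*} [DecidableEq ι] {s : Finset ι} {f : ι → E3 → ℂ}
    (hf : ∀ i ∈ s, DifferentiableAt ℝ (f i) x) :
    pd1C (fun y => ∏ i ∈ s, f i y) x = ∑ i ∈ s, (∏ j ∈ s.erase i, f j x) * pd1C (f i) x := by
  simp [pd1C, fderiv_finsetProd hf]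

lemma pd1C_pow {f : E3 → ℂ} (hf : DifferentiableAt ℝ f x) (n : ℕ) :
    pd1C (fun y => f y ^ n) x = n * f x ^ (n - 1) * pd1C f x := by
  simp [pd1C, fderiv_fun_pow n hf, mul_assoc]

lemma differentiableAt_div {f g : E3 → ℂ} (hf : DifferentiableAt ℝ f x)
    (hg : DifferentiableAt ℝ g x) (hgx : g x ≠ 0) :
    DifferentiableAt ℝ (fun y => f y / g y) x := by
  simpa only [div_eq_mul_inv] using hf.fun_mul (hg.fun_inv hgx)

lemma pd1C_div {f g : E3 → ℂ} (hf : DifferentiableAt ℝ f x) (hg : DifferentiableAt ℝ g x)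
    (hgx : g x ≠ 0) :
    pd1C (fun y => f y / g y) x = (pd1C f x * g x - f x * pd1C g x) / g x ^ 2 := by
  have hinv : DifferentiableAt ℝ (fun y => (g y)⁻¹) x := hg.fun_inv hgx
  have hcomp : (fun y => (g y)⁻¹) = Inv.inv ∘ g := rfl
  simp only [div_eq_mul_inv, pd1C, fderiv_fun_mul hf hinv]
  rw [hcomp, fderiv_comp x (differentiableAt_inv hgx) hg, fderiv_inv' hgx]
  simp only [ContinuousLinearMap.neg_comp, smul_neg, add_apply, neg_apply, smul_apply,
    ContinuousLinearMap.comp_apply, ContinuousLinearMap.mulLeftRight_apply, smul_eq_mul]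
  field_simp
  ring

end Calculus

section Smoothness

variable {U : Set E3}

lemma contDiffOn_iterate_pd1C (hU : IsOpen U) {f : E3 → ℂ} (hf : ContDiffOn ℝ (⊤ : ℕ∞) f U)
    (k : ℕ) :
    ContDiffOn ℝ (⊤ : ℕ∞) (pd1C^[k] f) U :=
  Iterate.rec (fun g => ContDiffOn ℝ (⊤ : ℕ∞) g U) hf (fun _ hg => contDiffOn_pd1C hU hg) k

lemma contDiffOn_iterate_pd1R (hU : IsOpen U) {f : E3 → ℝ} (hf : ContDiffOn ℝ (⊤ : ℕ∞) f U)
    (k : ℕ) :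
    ContDiffOn ℝ (⊤ : ℕ∞) (pd1R^[k] f) U :=
  Iterate.rec (fun g => ContDiffOn ℝ (⊤ : ℕ∞) g U) hf (fun _ hg => contDiffOn_pd1R hU hg) k

end Smoothness

section Linearity

variable {Φ : E3 → ℝ} {x : E3}

lemma Dadj_congr {U : Set E3} (hU : IsOpen U) (hx : x ∈ U) {u v : E3 → ℂ} (huv : Set.EqOn u v U) :
    Dadj Φ u x = Dadj Φ v x := by
  have hloc : (fun y => u y / (pd1R Φ y : ℂ)) =ᶠ[nhds x] fun y => v y / (pd1R Φ y : ℂ) :=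
    Filter.eventually_of_mem (hU.mem_nhds hx) fun y hy => by simp only [huv hy]
  simp only [Dadj, pd1C, hloc.fderiv_eq]

lemma differentiableAt_div_pd1R (hΦ : DifferentiableAt ℝ (pd1R Φ) x) (hd : pd1R Φ x ≠ 0)
    {u : E3 → ℂ} (hu : DifferentiableAt ℝ u x) :
    DifferentiableAt ℝ (fun y => u y / (pd1R Φ y : ℂ)) x :=
  differentiableAt_div hu (Complex.ofRealCLM.differentiableAt.comp x hΦ)
    (Complex.ofReal_ne_zero.mpr hd)

lemma Dadj_sum (hΦ : DifferentiableAt ℝ (pd1R Φ) x) (hd : pd1R Φ x ≠ 0)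
    {ι : Type*} {s : Finset ι} {u : ι → E3 → ℂ}
    (hu : ∀ i ∈ s, DifferentiableAt ℝ (u i) x) :
    Dadj Φ (fun y => ∑ i ∈ s, u i y) x = ∑ i ∈ s, Dadj Φ (u i) x := by
  simp only [Dadj, sum_div]
  rw [pd1C_sum fun i hi => differentiableAt_div_pd1R hΦ hd (hu i hi), sum_neg_distrib]

lemma Dadj_const_mul (hΦ : DifferentiableAt ℝ (pd1R Φ) x) (hd : pd1R Φ x ≠ 0) (c : ℂ)
    {u : E3 → ℂ} (hu : DifferentiableAt ℝ u x) :
    Dadj Φ (fun y => c * u y) x = c * Dadj Φ u x := by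
  simp only [Dadj, mul_div_assoc]
  rw [pd1C_const_mul c (differentiableAt_div_pd1R hΦ hd hu), mul_neg]

end Linearity

section Expansion

variable {x : E3}

lemma pd1C_prod_tower {ι : Type*} [Fintype ι] [DecidableEq ι] {u : ι → ℕ → E3 → ℂ}
    (hu : ∀ i k, DifferentiableAt ℝ (u i k) x) (hu' : ∀ i k, pd1C (u i k) x = u i (k + 1) x)
    (α : ι → ℕ) :
    pd1C (fun y => ∏ i, u i (α i) y) x = ∑ j, ∏ i, u i (update α j (α j + 1) i) x := by
  rw [pd1C_prod fun i _ => hu i (α i)]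
  refine sum_congr rfl fun j _ => ?_
  simp only [apply_update (fun i k => u i k x), prod_update_of_mem (mem_univ j),
    sdiff_singleton_eq_erase, hu', mul_comm]

variable (Φ : E3 → ℝ) (h : E3 → ℂ)

/-- Factor `0` of an expansion term is `h` and every other factor is `∂₁²Φ`;
`derivTower Φ h i k` is the `k`-th `∂₁`-derivative of factor `i`. -/
def derivTower : ℕ → ℕ → E3 → ℂ
  | 0, k => pd1C^[k] h
  | _ + 1, k => fun y => (pd1R^[k + 2] Φ y : ℂ)

def expansionTerm (m : ℕ) {r : ℕ} (α : Fin (r + 1) → ℕ) (y : E3) : ℂ :=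
  (∏ j : Fin (r + 1), derivTower Φ h j (α j) y) / (pd1R Φ y : ℂ) ^ (r + m)

lemma prod_derivTower {r : ℕ} (α : Fin (r + 1) → ℕ) (y : E3) :
    ∏ j : Fin (r + 1), derivTower Φ h j (α j) y
      = pd1C^[α 0] h y * ∏ q : Fin r, (pd1R^[α q.succ + 2] Φ y : ℂ) := by
  simp [Fin.prod_univ_succ, derivTower]

lemma prod_derivTower_snoc {r : ℕ} (α : Fin (r + 1) → ℕ) (y : E3) :
    ∏ j : Fin (r + 2), derivTower Φ h j ((Fin.snoc α 0 : Fin (r + 2) → ℕ) j) y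
      = (∏ j : Fin (r + 1), derivTower Φ h j (α j) y) * (pd1R^[2] Φ y : ℂ) := by
  simp [Fin.prod_univ_castSucc, derivTower]

variable {Φ h}

lemma differentiableAt_derivTower (hΦ : ∀ k, DifferentiableAt ℝ (pd1R^[k] Φ) x)
    (hh : ∀ k, DifferentiableAt ℝ (pd1C^[k] h) x) :
    ∀ i k, DifferentiableAt ℝ (derivTower Φ h i k) x
  | 0, k => hh k
  | _ + 1, k => Complex.ofRealCLM.differentiableAt.comp x (hΦ (k + 2))

lemma pd1C_derivTower (hΦ : ∀ k, DifferentiableAt ℝ (pd1R^[k] Φ) x) :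
    ∀ i k, pd1C (derivTower Φ h i k) x = derivTower Φ h i (k + 1) x
  | 0, k => by simp only [derivTower, iterate_succ_apply']
  | _ + 1, k => by
    show _ = ((pd1R^[(k + 2) + 1] Φ x : ℝ) : ℂ)
    rw [iterate_succ_apply']
    exact pd1C_ofReal (hΦ (k + 2))

lemma differentiableAt_prod_derivTower (hΦ : ∀ k, DifferentiableAt ℝ (pd1R^[k] Φ) x)
    (hh : ∀ k, DifferentiableAt ℝ (pd1C^[k] h) x) {r : ℕ} (α : Fin (r + 1) → ℕ) :
    DifferentiableAt ℝ (fun y => ∏ j : Fin (r + 1), derivTower Φ h j (α j) y) x :=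
  (HasFDerivAt.finsetProd fun (j : Fin (r + 1)) _ =>
    (differentiableAt_derivTower hΦ hh j (α j)).hasFDerivAt).differentiableAt

lemma differentiableAt_expansionTerm (hΦ : ∀ k, DifferentiableAt ℝ (pd1R^[k] Φ) x)
    (hh : ∀ k, DifferentiableAt ℝ (pd1C^[k] h) x) (hd : pd1R Φ x ≠ 0)
    (m : ℕ) {r : ℕ} (α : Fin (r + 1) → ℕ) :
    DifferentiableAt ℝ (expansionTerm Φ h m α) x :=
  differentiableAt_div (differentiableAt_prod_derivTower hΦ hh α)
    ((Complex.ofRealCLM.differentiableAt.comp x (hΦ 1)).fun_pow _)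
    (pow_ne_zero _ (Complex.ofReal_ne_zero.mpr hd))

lemma Dadj_expansionTerm (hΦ : ∀ k, DifferentiableAt ℝ (pd1R^[k] Φ) x)
    (hh : ∀ k, DifferentiableAt ℝ (pd1C^[k] h) x) (hd : pd1R Φ x ≠ 0)
    (m : ℕ) {r : ℕ} (α : Fin (r + 1) → ℕ) :
    Dadj Φ (expansionTerm Φ h m α) x
      = -∑ j, expansionTerm Φ h (m + 1) (update α j (α j + 1)) x
        + (r + m + 1) * expansionTerm Φ h (m + 1) (Fin.snoc α 0) x := by
  have hd' : (pd1R Φ x : ℂ) ≠ 0 := Complex.ofReal_ne_zero.mpr hd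
  have hdiff_d : DifferentiableAt ℝ (fun y => (pd1R Φ y : ℂ)) x :=
    Complex.ofRealCLM.differentiableAt.comp x (hΦ 1)
  have hderiv_d : pd1C (fun y => (pd1R Φ y : ℂ)) x = pd1R^[2] Φ x := pd1C_ofReal (hΦ 1)
  have hquot : (fun y => expansionTerm Φ h m α y / (pd1R Φ y : ℂ))
      = fun y => (∏ j : Fin (r + 1), derivTower Φ h j (α j) y) / (pd1R Φ y : ℂ) ^ (r + m + 1) := by
    funext y
    rw [expansionTerm, div_div, ← pow_succ]
  rw [Dadj, hquot, pd1C_div (differentiableAt_prod_derivTower hΦ hh α) (hdiff_d.fun_pow _)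
      (pow_ne_zero _ hd'), pd1C_pow hdiff_d, hderiv_d,
    pd1C_prod_tower (u := fun (j : Fin (r + 1)) => derivTower Φ h j)
      (differentiableAt_derivTower hΦ hh ·) (pd1C_derivTower hΦ ·) α]
  simp only [expansionTerm, prod_derivTower_snoc, Nat.add_sub_cancel, ← sum_div]
  field_simp
  push_cast
  ring

end Expansion

section Coefficients

def lowerCoeff {k : ℕ} (c : (Fin k → ℕ) → ℝ) (j : Fin k) (α : Fin k → ℕ) : ℝ :=
  if α j = 0 then 0 else c (update α j (α j - 1))

def appendCoeff (c : (r : ℕ) → (Fin (r + 1) → ℕ) → ℝ) (N : ℕ) :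
    (r : ℕ) → (Fin (r + 1) → ℕ) → ℝ
  | 0, _ => 0
  | r + 1, α => if α (Fin.last (r + 1)) = 0 then (r + N + 1) * c r (Fin.init α) else 0

/-- `expansionCoeff N r α` is the coefficient of `∂₁^{α₀}h · ∏ ∂₁^{α_q+2}Φ / (∂₁Φ)^{r+N}` in
`(D′)^N h`; the recursion is read off from `Dadj_expansionTerm`. -/
def expansionCoeff : ℕ → (r : ℕ) → (Fin (r + 1) → ℕ) → ℝ
  | 0 => fun r _ => if r = 0 then 1 else 0
  | N + 1 => fun r α =>
      -∑ j, lowerCoeff (expansionCoeff N r) j α + appendCoeff (expansionCoeff N) N r α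

lemma abs_lowerCoeff_le {k : ℕ} {c : (Fin k → ℕ) → ℝ} {M : ℝ} (hc : ∀ α, |c α| ≤ M)
    (hM : 0 ≤ M) (j : Fin k) (α : Fin k → ℕ) : |lowerCoeff c j α| ≤ M := by
  unfold lowerCoeff
  split_ifs
  exacts [by simpa using hM, hc _]

lemma abs_appendCoeff_le {c : (r : ℕ) → (Fin (r + 1) → ℕ) → ℝ} {M : ℝ}
    (hc : ∀ r α, |c r α| ≤ M) (hM : 0 ≤ M) (N : ℕ) :
    ∀ r α, |appendCoeff c N r α| ≤ (r + N) * M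
  | 0, _ => by simp only [appendCoeff, abs_zero]; positivity
  | r + 1, α => by
    rw [appendCoeff]
    split_ifs
    · rw [abs_mul, abs_of_nonneg (by positivity)]
      push_cast
      nlinarith [hc r (Fin.init α)]
    · simp only [abs_zero]; positivity

lemma expansionCoeff_eq_zero_of_lt {N r : ℕ} (hr : N < r) (α : Fin (r + 1) → ℕ) :
    expansionCoeff N r α = 0 := by
  induction N generalizing r with
  | zero => simp [expansionCoeff, hr.ne']
  | succ N ih =>
    obtain ⟨r, rfl⟩ : ∃ r', r = r' + 1 := ⟨r - 1, by omega⟩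
    simp [expansionCoeff, lowerCoeff, appendCoeff, ih (show N < r + 1 by omega),
      ih (show N < r by omega)]

lemma abs_expansionCoeff_le (N r : ℕ) (α : Fin (r + 1) → ℕ) :
    |expansionCoeff N r α| ≤ 3 ^ N * (N + 1).factorial := by
  induction N generalizing r with
  | zero => unfold expansionCoeff; split_ifs <;> simp
  | succ N ih =>
    rcases lt_or_ge (N + 1) r with hr | hr
    · rw [expansionCoeff_eq_zero_of_lt hr, abs_zero]; positivity
    set M : ℝ := 3 ^ N * (N + 1).factorial
    have hM : 0 ≤ M := by positivity
    have hr' : (r : ℝ) ≤ N + 1 := by exact_mod_cast hr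
    have hlower : |∑ j, lowerCoeff (expansionCoeff N r) j α| ≤ (r + 1) * M :=
      calc |∑ j, lowerCoeff (expansionCoeff N r) j α|
          ≤ ∑ j, |lowerCoeff (expansionCoeff N r) j α| := abs_sum_le_sum_abs _ _
        _ ≤ ∑ _j : Fin (r + 1), M := sum_le_sum fun j _ => abs_lowerCoeff_le (ih r) hM j α
        _ = (r + 1) * M := by simp
    calc |expansionCoeff (N + 1) r α|
        ≤ (r + 1) * M + (r + N) * M := by
          rw [expansionCoeff]
          refine (abs_add_le _ _).trans (add_le_add ?_ (abs_appendCoeff_le ih hM N r α))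
          rwa [abs_neg]
      _ ≤ 3 * (N + 2) * M := by nlinarith
      _ = 3 ^ (N + 1) * (N + 1 + 1).factorial := by
          simp only [M, Nat.factorial_succ (N + 1)]; push_cast; ring

end Coefficients

section Reindexing

lemma sum_update_add_self {k : ℕ} (α : Fin k → ℕ) (j : Fin k) (v : ℕ) :
    ∑ i, update α j v i + α j = ∑ i, α i + v := by
  rw [sum_update_of_mem (mem_univ j), ← sum_erase_add univ α (mem_univ j), sdiff_singleton_eq_erase]
  ring

lemma sum_antidiagonalTuple_lowerCoeff {k : ℕ} (c : (Fin k → ℕ) → ℝ) (f : (Fin k → ℕ) → ℂ)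
    (j : Fin k) (n : ℕ) :
    ∑ α ∈ Nat.antidiagonalTuple k (n + 1), (lowerCoeff c j α : ℂ) * f α
      = ∑ α ∈ Nat.antidiagonalTuple k n, (c α : ℂ) * f (update α j (α j + 1)) := by
  have hvanish : ∀ α ∈ Nat.antidiagonalTuple k (n + 1), α j = 0 →
      (lowerCoeff c j α : ℂ) * f α = 0 :=
    fun α _ hα => by simp [lowerCoeff, hα]
  rw [← sum_filter_of_ne fun α hα h => not_imp_not.mpr (hvanish α hα) h]
  refine sum_nbij' (fun α => update α j (α j - 1)) (fun α => update α j (α j + 1))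
    ?_ ?_ ?_ ?_ ?_
  · simp only [mem_filter, Nat.mem_antidiagonalTuple]
    intro α ⟨hsum, hj⟩
    have := sum_update_add_self α j (α j - 1)
    omega
  · simp only [mem_filter, Nat.mem_antidiagonalTuple, update_self]
    intro α hsum
    have := sum_update_add_self α j (α j + 1)
    omega
  · intro α hα
    have : α j ≠ 0 := (mem_filter.mp hα).2
    simp [Nat.sub_add_cancel (Nat.one_le_iff_ne_zero.mpr this)]
  · intro α _
    simp
  · intro α hα
    simp [lowerCoeff, (mem_filter.mp hα).2,
      Nat.sub_add_cancel (Nat.one_le_iff_ne_zero.mpr (mem_filter.mp hα).2)]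

lemma sum_antidiagonalTuple_last_eq_zero {M : Type*} [AddCommMonoid M] {k n : ℕ}
    (f : (Fin (k + 2) → ℕ) → M) :
    ∑ α ∈ Nat.antidiagonalTuple (k + 2) n with α (Fin.last (k + 1)) = 0, f α
      = ∑ α ∈ Nat.antidiagonalTuple (k + 1) n, f (Fin.snoc α 0) := by
  refine sum_nbij' Fin.init (fun α => Fin.snoc α 0) ?_ ?_ ?_ ?_ ?_
  · simp only [mem_filter, Nat.mem_antidiagonalTuple]
    intro α ⟨hsum, hlast⟩
    rwa [Fin.sum_univ_castSucc, hlast, add_zero] at hsum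
  · simp only [mem_filter, Nat.mem_antidiagonalTuple, Fin.snoc_last, and_true]
    intro α hsum
    simpa [Fin.sum_univ_castSucc] using hsum
  · intro α hα
    rw [← (mem_filter.mp hα).2, Fin.snoc_init_self]
  · intro α _
    exact Fin.init_snoc _ _
  · intro α hα
    rw [← (mem_filter.mp hα).2, Fin.snoc_init_self]

end Reindexing

section Regrouping

variable (c : (r : ℕ) → (Fin (r + 1) → ℕ) → ℝ) (N : ℕ) (t : (r : ℕ) → (Fin (r + 1) → ℕ) → ℂ)

lemma sum_sum_lowerCoeff :
    ∑ r ∈ range (N + 2), ∑ α ∈ Nat.antidiagonalTuple (r + 1) (N + 1 - r),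
        ((∑ j, lowerCoeff (c r) j α : ℝ) : ℂ) * t r α
      = ∑ r ∈ range (N + 1), ∑ α ∈ Nat.antidiagonalTuple (r + 1) (N - r),
          (c r α : ℂ) * ∑ j, t r (update α j (α j + 1)) := by
  rw [sum_range_succ, Nat.sub_self, Nat.antidiagonalTuple_zero_right]
  simp only [sum_singleton, Pi.zero_apply, lowerCoeff, if_true, sum_const_zero,
    Complex.ofReal_zero, zero_mul, add_zero]
  refine sum_congr rfl fun r hr => ?_
  rw [show N + 1 - r = N - r + 1 by have := mem_range.mp hr; omega]
  simp only [Complex.ofReal_sum, sum_mul, mul_sum]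
  rw [sum_comm, sum_comm (s := Nat.antidiagonalTuple (r + 1) (N - r))]
  exact sum_congr rfl fun j _ => sum_antidiagonalTuple_lowerCoeff (c r) (t r) j (N - r)

lemma sum_sum_appendCoeff :
    ∑ r ∈ range (N + 2), ∑ α ∈ Nat.antidiagonalTuple (r + 1) (N + 1 - r),
        (appendCoeff c N r α : ℂ) * t r α
      = ∑ r ∈ range (N + 1), ∑ α ∈ Nat.antidiagonalTuple (r + 1) (N - r),
          (r + N + 1) * (c r α : ℂ) * t (r + 1) (Fin.snoc α 0) := by
  rw [sum_range_succ']
  simp only [appendCoeff, Complex.ofReal_zero, zero_mul, sum_const_zero, add_zero,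
    Nat.add_sub_add_right, apply_ite ((↑) : ℝ → ℂ), ite_mul]
  refine sum_congr rfl fun r _ => ?_
  rw [← sum_filter, sum_antidiagonalTuple_last_eq_zero]
  simp [Fin.init_snoc]

lemma sum_sum_expansionCoeff_succ :
    ∑ r ∈ range (N + 2), ∑ α ∈ Nat.antidiagonalTuple (r + 1) (N + 1 - r),
        (expansionCoeff (N + 1) r α : ℂ) * t r α
      = ∑ r ∈ range (N + 1), ∑ α ∈ Nat.antidiagonalTuple (r + 1) (N - r),
          (expansionCoeff N r α : ℂ) *
            (-∑ j, t r (update α j (α j + 1)) + (r + N + 1) * t (r + 1) (Fin.snoc α 0)) := by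
  have hsplit : ∀ r α, (expansionCoeff (N + 1) r α : ℂ) * t r α
      = -(((∑ j, lowerCoeff (expansionCoeff N r) j α : ℝ) : ℂ) * t r α)
        + (appendCoeff (expansionCoeff N) N r α : ℂ) * t r α := by
    intro r α
    simp only [expansionCoeff, Complex.ofReal_add, Complex.ofReal_neg]
    ring
  simp only [hsplit, sum_add_distrib, sum_neg_distrib, sum_sum_lowerCoeff, sum_sum_appendCoeff]
  rw [← sum_neg_distrib, ← sum_add_distrib]
  refine sum_congr rfl fun r _ => ?_
  rw [← sum_neg_distrib, ← sum_add_distrib]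
  refine sum_congr rfl fun α _ => ?_
  ring

end Regrouping

lemma iterate_Dadj_eq_sum {U : Set E3} {Φ : E3 → ℝ} {h : E3 → ℂ} (hU : IsOpen U)
    (hΦ : ContDiffOn ℝ (⊤ : ℕ∞) Φ U) (hd : ∀ x ∈ U, pd1R Φ x ≠ 0)
    (hh : ContDiffOn ℝ (⊤ : ℕ∞) h U) (N : ℕ) {x : E3} (hx : x ∈ U) :
    (Dadj Φ)^[N] h x = ∑ r ∈ range (N + 1), ∑ α ∈ Nat.antidiagonalTuple (r + 1) (N - r),
      (expansionCoeff N r α : ℂ) * expansionTerm Φ h N α x := by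
  induction N generalizing x with
  | zero => simp [expansionCoeff, expansionTerm, derivTower]
  | succ N ih =>
    have hΦx : ∀ k, DifferentiableAt ℝ (pd1R^[k] Φ) x := fun k =>
      (contDiffOn_iterate_pd1R hU hΦ k).contDiffAt (hU.mem_nhds hx) |>.differentiableAt (by simp)
    have hhx : ∀ k, DifferentiableAt ℝ (pd1C^[k] h) x := fun k =>
      (contDiffOn_iterate_pd1C hU hh k).contDiffAt (hU.mem_nhds hx) |>.differentiableAt (by simp)
    have hterm : ∀ {r} (α : Fin (r + 1) → ℕ), DifferentiableAt ℝ (expansionTerm Φ h N α) x :=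
      fun α => differentiableAt_expansionTerm hΦx hhx (hd x hx) N α
    calc (Dadj Φ)^[N + 1] h x
        = Dadj Φ (fun y => ∑ r ∈ range (N + 1), ∑ α ∈ Nat.antidiagonalTuple (r + 1) (N - r),
            (expansionCoeff N r α : ℂ) * expansionTerm Φ h N α y) x := by
          rw [iterate_succ_apply']
          exact Dadj_congr hU hx fun y hy => ih hy
      _ = ∑ r ∈ range (N + 1), ∑ α ∈ Nat.antidiagonalTuple (r + 1) (N - r),
            (expansionCoeff N r α : ℂ) * Dadj Φ (expansionTerm Φ h N α) x := by
          rw [Dadj_sum (hΦx 1) (hd x hx) fun r _ =>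
            DifferentiableAt.fun_sum fun α _ => (hterm α).const_mul _]
          refine sum_congr rfl fun r _ => ?_
          rw [Dadj_sum (hΦx 1) (hd x hx) fun α _ => (hterm α).const_mul _]
          exact sum_congr rfl fun α _ => Dadj_const_mul (hΦx 1) (hd x hx) _ (hterm α)
      _ = _ := by
          simp only [Dadj_expansionTerm hΦx hhx (hd x hx)]
          exact (sum_sum_expansionCoeff_succ N
            fun r α => expansionTerm Φ h (N + 1) α x).symm

theorem statement1_general (N : ℕ) :
    ∃ Ω : (r : ℕ) → (Fin (r + 1) → ℕ) → ℝ,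
      (∀ r α, |Ω r α| ≤ 3 ^ N * (Nat.factorial (N + 1) : ℝ)) ∧
      ∀ (U : Set E3) (Φ : E3 → ℝ) (h : E3 → ℂ),
        IsOpen U → ContDiffOn ℝ (⊤ : ℕ∞) Φ U → (∀ x ∈ U, pd1R Φ x ≠ 0) →
        ContDiffOn ℝ (⊤ : ℕ∞) h U →
        ∀ x ∈ U,
          (Dadj Φ)^[N] h x =
            ∑ r ∈ Finset.range (N + 1),
              ∑ α ∈ Finset.Nat.antidiagonalTuple (r + 1) (N - r),
                (Ω r α : ℂ) * (pd1C^[α 0] h x) *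
                  (∏ q : Fin r, ((pd1R^[α q.succ + 2] Φ x : ℝ) : ℂ)) /
                  ((pd1R Φ x : ℝ) : ℂ) ^ (r + N) := by
  refine ⟨expansionCoeff N, abs_expansionCoeff_le N, ?_⟩
  intro U Φ h hU hΦ hd hh x hx
  rw [iterate_Dadj_eq_sum hU hΦ hd hh N hx]
  refine sum_congr rfl fun r _ => sum_congr rfl fun α _ => ?_
  rw [expansionTerm, prod_derivTower, ← mul_div_assoc, ← mul_assoc]

/-- Explicit expansion of `(D′)^N h` with controlled coefficients. -/
theorem statement1 (N : ℕ) (hN : 1 ≤ N) :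
    ∃ Ω : (r : ℕ) → (Fin (r + 1) → ℕ) → ℝ,
      (∀ r α, |Ω r α| ≤ 3 ^ N * (Nat.factorial (N + 1) : ℝ)) ∧
      ∀ (U : Set E3) (Φ : E3 → ℝ) (h : E3 → ℂ),
        IsOpen U → ContDiffOn ℝ (⊤ : ℕ∞) Φ U → (∀ x ∈ U, pd1R Φ x ≠ 0) →
        ContDiffOn ℝ (⊤ : ℕ∞) h U →
        ∀ x ∈ U,
          (Dadj Φ)^[N] h x =
            ∑ r ∈ Finset.range (N + 1),
              ∑ α ∈ Finset.Nat.antidiagonalTuple (r + 1) (N - r),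
                (Ω r α : ℂ) * (pd1C^[α 0] h x) *
                  (∏ q : Fin r, ((pd1R^[α q.succ + 2] Φ x : ℝ) : ℂ)) /
                  ((pd1R Φ x : ℝ) : ℂ) ^ (r + N) :=
  statement1_general N
end
end

section
/- Let F, G : (0,∞) → [0,∞] be measurable and let ξ ∈ ℝ³ with ξ ≠ 0. Then ∫_{ℝ³} F(|ξ−ζ|) G(|ζ|) dζ = (2π/|ξ|) ∫₀^∞ ∫₀^∞ ρ τ F(ρ) G(τ) · 𝟙{|ρ−τ| ≤ |ξ| ≤ ρ+τ} dρ dτ, where 𝟙 denotes the indicator of the set of pairs (ρ,τ) with |ρ−τ| ≤ |ξ| ≤ ρ+τ. -/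
open MeasureTheory Set
open scoped ENNReal

noncomputable section

/-!
Rotate `ξ` to `a e₀` with `a = ‖ξ‖` and use cylindrical coordinates `(z, r)` around that axis;
the angular integration gives `2π r dr`. For fixed height `z`, the substitution
`ρ² = (a - z)² + r²` gives `r dr = ρ dρ` with `ρ > |a - z|`. After exchanging the order of
integration, for fixed `ρ` the height runs over `(a - ρ, a + ρ)` and `τ² = z² + r² = ρ² - a² + 2az`,
so `dz = τ dτ / a` with `τ ∈ (|ρ - a|, ρ + a)`. The endpoints of that interval form a null set.
-/

theorem lintegral_norm_sub_eq_of_norm_eq {E : Type*} [NormedAddCommGroup E]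
    [InnerProductSpace ℝ E] [FiniteDimensional ℝ E] [MeasurableSpace E] [BorelSpace E]
    (f : ℝ → ℝ → ℝ≥0∞) {v w : E} (h : ‖v‖ = ‖w‖) :
    ∫⁻ x, f ‖v - x‖ ‖x‖ = ∫⁻ x, f ‖w - x‖ ‖x‖ := by
  set L := (ℝ ∙ (w - v))ᗮ.reflection
  rw [← L.measurePreserving.lintegral_comp_emb L.toHomeomorph.measurableEmbedding]
  refine lintegral_congr fun x => ?_
  rw [← Submodule.reflection_sub h.symm, ← map_sub, L.norm_map, L.norm_map]

theorem volume_preserving_toLp_fin_three :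
    MeasurePreserving (fun q : ℝ × ℝ × ℝ => (!₂[q.1, q.2.1, q.2.2] : E3)) := by
  have := ((PiLp.volume_preserving_toLp (Fin 3)).comp
    (volume_preserving_piFinSuccAbove (fun _ : Fin 3 => ℝ) 0).symm).comp
    ((MeasurePreserving.id volume).prod (volume_preserving_finTwoArrow ℝ).symm)
  convert this using 1
  · ext q i
    fin_cases i <;> rfl
  · exact Measure.volume_eq_prod _ _

theorem lintegral_euclideanSpace_fin_three {f : E3 → ℝ≥0∞} (hf : Measurable f) :
    ∫⁻ x, f x = ∫⁻ z, ∫⁻ y : ℝ × ℝ, f !₂[z, y.1, y.2] := by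
  rw [← volume_preserving_toLp_fin_three.lintegral_comp hf, Measure.volume_eq_prod]
  exact lintegral_prod _ (hf.comp volume_preserving_toLp_fin_three.measurable).aemeasurable

theorem lintegral_comp_sq_add_sq {h : ℝ → ℝ≥0∞} (hh : Measurable h) :
    ∫⁻ y : ℝ × ℝ, h (y.1 ^ 2 + y.2 ^ 2) =
      ENNReal.ofReal (2 * Real.pi) * ∫⁻ r in Ioi 0, ENNReal.ofReal r * h (r ^ 2) := by
  have hsq (p : ℝ × ℝ) : (polarCoord.symm p).1 ^ 2 + (polarCoord.symm p).2 ^ 2 = p.1 ^ 2 := by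
    simp only [polarCoord_symm_apply, mul_pow, ← mul_add, Real.cos_sq_add_sin_sq, mul_one]
  rw [← lintegral_comp_polarCoord_symm, polarCoord_target, Measure.volume_eq_prod,
    ← Measure.prod_restrict, lintegral_prod _ (by fun_prop)]
  simp only [hsq, smul_eq_mul, setLIntegral_const, Real.volume_Ioo, sub_neg_eq_add, ← two_mul]
  rw [lintegral_mul_const' _ _ ENNReal.ofReal_ne_top, mul_comm]

theorem two_mul_lintegral_Ioi_mul_comp_sq_sub_sq {b : ℝ} (hb : 0 ≤ b) (h : ℝ → ℝ≥0∞) :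
    2 * ∫⁻ ρ in Ioi b, ENNReal.ofReal ρ * h (ρ ^ 2 - b ^ 2) = ∫⁻ s in Ioi 0, h s := by
  have himage : (fun ρ => ρ ^ 2 - b ^ 2) '' Ioi b = Ioi 0 := by
    ext s
    refine ⟨?_, fun hs => ⟨√(s + b ^ 2), ?_, ?_⟩⟩
    · rintro ⟨ρ, hρ : b < ρ, rfl⟩
      simp only [mem_Ioi, sub_pos]
      nlinarith
    · rw [mem_Ioi, Real.lt_sqrt hb]
      linarith [mem_Ioi.mp hs]
    · simp only
      rw [Real.sq_sqrt (by positivity [mem_Ioi.mp hs]), add_sub_cancel_right]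
  rw [← himage, lintegral_image_eq_lintegral_abs_deriv_mul measurableSet_Ioi
    (f' := fun ρ => 2 * ρ) _ _, ← lintegral_const_mul' _ _ (by simp)]
  · refine setLIntegral_congr_fun measurableSet_Ioi fun ρ (hρ : b < ρ) => ?_
    rw [abs_of_pos (by linarith), ENNReal.ofReal_mul zero_le_two, mul_assoc]
    simp
  · exact fun ρ _ => ((hasDerivAt_pow 2 ρ).sub_const _).hasDerivWithinAt.congr_deriv (by ring)
  · intro x (hx : b < x) y (hy : b < y) hxy
    simp only [sub_left_inj] at hxy
    exact (pow_left_inj₀ (by linarith) (by linarith) two_ne_zero).mp hxy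

theorem lintegral_Ioi_mul_comp_sq (c : ℝ) (h : ℝ → ℝ≥0∞) :
    ∫⁻ r in Ioi 0, ENNReal.ofReal r * h (r ^ 2) =
      ∫⁻ ρ in Ioi |c|, ENNReal.ofReal ρ * h (ρ ^ 2 - c ^ 2) := by
  have h0 := two_mul_lintegral_Ioi_mul_comp_sq_sub_sq le_rfl h
  have hc := two_mul_lintegral_Ioi_mul_comp_sq_sub_sq (abs_nonneg c) h
  rw [sq_abs] at hc
  simp only [ne_eq, OfNat.ofNat_ne_zero, not_false_eq_true, zero_pow, sub_zero] at h0
  exact (ENNReal.mul_right_inj two_ne_zero ENNReal.ofNat_ne_top).mp (h0.trans hc.symm)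

theorem lintegral_Ioo_comp_affine {a ρ : ℝ} (ha : 0 < a) (hρ : 0 ≤ ρ) (h : ℝ → ℝ≥0∞) :
    ∫⁻ z in Ioo (a - ρ) (a + ρ), h (ρ ^ 2 - a ^ 2 + 2 * a * z) =
      ∫⁻ τ in Ioo |ρ - a| (ρ + a), ENNReal.ofReal (τ / a) * h (τ ^ 2) := by
  set f : ℝ → ℝ := fun τ => (τ ^ 2 + a ^ 2 - ρ ^ 2) / (2 * a)
  have hf (τ : ℝ) : ρ ^ 2 - a ^ 2 + 2 * a * f τ = τ ^ 2 := by
    simp only [f]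
    field_simp
    ring
  have hmono : StrictMonoOn f (Icc |ρ - a| (ρ + a)) := fun x hx y hy hxy => by
    have hx0 : 0 ≤ x := (abs_nonneg _).trans hx.1
    simp only [f]
    gcongr
  have himage : f '' Ioo |ρ - a| (ρ + a) = Ioo (a - ρ) (a + ρ) := by
    rw [(by fun_prop : Continuous f).continuousOn.image_Ioo_of_strictMonoOn
      (abs_sub_le_iff.mpr ⟨by linarith, by linarith⟩) hmono]
    congr 1 <;> simp only [f, sq_abs] <;> field_simp <;> ring
  rw [← himage, lintegral_image_eq_lintegral_abs_deriv_mul measurableSet_Ioo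
    (f' := fun τ => τ / a) _ (hmono.injOn.mono Ioo_subset_Icc_self)]
  · refine setLIntegral_congr_fun measurableSet_Ioo fun τ hτ => ?_
    rw [hf, abs_of_nonneg (div_nonneg ((abs_nonneg _).trans hτ.1.le) ha.le)]
  · refine fun τ _ => (((hasDerivAt_pow 2 τ).add_const _).sub_const _).div_const _
      |>.hasDerivWithinAt.congr_deriv ?_
    field_simp
    ring

theorem lintegral_lintegral_Ioi_abs_sub_swap (a : ℝ) {H : ℝ → ℝ → ℝ≥0∞}
    (hH : Measurable (Function.uncurry H)) :
    ∫⁻ z, ∫⁻ ρ in Ioi |a - z|, H z ρ = ∫⁻ ρ in Ioi 0, ∫⁻ z in Ioo (a - ρ) (a + ρ), H z ρ := by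
  set D : Set (ℝ × ℝ) := {p | |a - p.1| < p.2}
  have hD : MeasurableSet D := measurableSet_lt (by fun_prop) measurable_snd
  have hmem (z ρ : ℝ) : (z, ρ) ∈ D ↔ 0 < ρ ∧ z ∈ Ioo (a - ρ) (a + ρ) := by
    simp only [D, mem_ofPred_eq, mem_Ioo, abs_sub_lt_iff]
    constructor
    · rintro ⟨h1, h2⟩
      exact ⟨by linarith, by linarith, by linarith⟩
    · rintro ⟨-, h1, h2⟩
      exact ⟨by linarith, by linarith⟩
  calc ∫⁻ z, ∫⁻ ρ in Ioi |a - z|, H z ρ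
      = ∫⁻ z, ∫⁻ ρ, D.indicator (Function.uncurry H) (z, ρ) := by
        refine lintegral_congr fun z => ?_
        rw [← lintegral_indicator measurableSet_Ioi]
        rfl
    _ = ∫⁻ ρ, ∫⁻ z, D.indicator (Function.uncurry H) (z, ρ) :=
        lintegral_lintegral_swap (hH.indicator hD).aemeasurable
    _ = ∫⁻ ρ in Ioi 0, ∫⁻ z in Ioo (a - ρ) (a + ρ), H z ρ := by
        rw [← lintegral_indicator measurableSet_Ioi]
        refine lintegral_congr fun ρ => ?_
        rw [indicator_apply, ← lintegral_indicator measurableSet_Ioo]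
        split_ifs with hρ <;> simp_all [indicator_apply]

theorem abs_sub_le_and_le_add_iff {ρ τ a : ℝ} :
    |ρ - τ| ≤ a ∧ a ≤ ρ + τ ↔ τ ∈ Icc |ρ - a| (ρ + a) := by
  simp only [mem_Icc, abs_le]
  constructor <;> rintro ⟨⟨h1, h2⟩, h3⟩ <;> exact ⟨⟨by linarith, by linarith⟩, by linarith⟩

theorem setLIntegral_Ioo_abs_sub_eq_ite (ρ a : ℝ) (h : ℝ → ℝ≥0∞) :
    ∫⁻ τ in Ioo |ρ - a| (ρ + a), h τ =
      ∫⁻ τ in Ioi 0, if |ρ - τ| ≤ a ∧ a ≤ ρ + τ then h τ else 0 := by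
  have hsub : Ioo |ρ - a| (ρ + a) ⊆ Ioi 0 := fun τ hτ => (abs_nonneg _).trans_lt hτ.1
  simp only [abs_sub_le_and_le_add_iff, ← indicator_apply]
  rw [← Measure.restrict_restrict_of_subset hsub, ← lintegral_indicator measurableSet_Ioo]
  exact lintegral_congr_ae (ae_restrict_of_ae (indicator_ae_eq_of_ae_eq_set Ioo_ae_eq_Icc))

section Axial

variable {F G : ℝ → ℝ≥0∞} {a : ℝ}

theorem lintegral_Ioo_mul_comp_sqrt {ρ : ℝ} (ha : 0 < a) (hρ : 0 ≤ ρ) :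
    ∫⁻ z in Ioo (a - ρ) (a + ρ), ENNReal.ofReal ρ * F ρ * G √(ρ ^ 2 - a ^ 2 + 2 * a * z) =
      ENNReal.ofReal a⁻¹ * ∫⁻ τ in Ioi 0,
        if |ρ - τ| ≤ a ∧ a ≤ ρ + τ then
          ENNReal.ofReal ρ * ENNReal.ofReal τ * F ρ * G τ else 0 := by
  rw [lintegral_Ioo_comp_affine ha hρ fun s => ENNReal.ofReal ρ * F ρ * G √s,
    setLIntegral_Ioo_abs_sub_eq_ite, ← lintegral_const_mul' _ _ ENNReal.ofReal_ne_top]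
  refine setLIntegral_congr_fun measurableSet_Ioi fun τ (hτ : 0 < τ) => ?_
  split_ifs
  · rw [Real.sqrt_sq hτ.le, div_eq_mul_inv, ENNReal.ofReal_mul hτ.le]
    ring
  · rw [mul_zero]

theorem lintegral_axial_coordinates (hF : Measurable F) (hG : Measurable G) (ha : 0 < a) :
    ∫⁻ z, ∫⁻ y : ℝ × ℝ,
        F √((a - z) ^ 2 + (y.1 ^ 2 + y.2 ^ 2)) * G √(z ^ 2 + (y.1 ^ 2 + y.2 ^ 2)) =
      ENNReal.ofReal (2 * Real.pi / a) *
        ∫⁻ ρ in Ioi 0, ∫⁻ τ in Ioi 0,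
          if |ρ - τ| ≤ a ∧ a ≤ ρ + τ then
            ENNReal.ofReal ρ * ENNReal.ofReal τ * F ρ * G τ else 0 := by
  calc _ = ∫⁻ z, ENNReal.ofReal (2 * Real.pi) * ∫⁻ ρ in Ioi |a - z|,
          ENNReal.ofReal ρ * F ρ * G √(ρ ^ 2 - a ^ 2 + 2 * a * z) := by
        refine lintegral_congr fun z => ?_
        set h := fun s => F √((a - z) ^ 2 + s) * G √(z ^ 2 + s)
        rw [lintegral_comp_sq_add_sq (h := h) (by fun_prop), lintegral_Ioi_mul_comp_sq (a - z) h]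
        congr 1
        refine setLIntegral_congr_fun measurableSet_Ioi fun ρ (hρ : |a - z| < ρ) => ?_
        simp only [h]
        rw [add_sub_cancel, Real.sqrt_sq ((abs_nonneg _).trans hρ.le), mul_assoc,
          show z ^ 2 + (ρ ^ 2 - (a - z) ^ 2) = ρ ^ 2 - a ^ 2 + 2 * a * z by ring]
    _ = ENNReal.ofReal (2 * Real.pi) * ∫⁻ ρ in Ioi 0, ∫⁻ z in Ioo (a - ρ) (a + ρ),
          ENNReal.ofReal ρ * F ρ * G √(ρ ^ 2 - a ^ 2 + 2 * a * z) := by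
        rw [lintegral_const_mul' _ _ ENNReal.ofReal_ne_top,
          lintegral_lintegral_Ioi_abs_sub_swap a (by fun_prop)]
    _ = _ := by
        rw [setLIntegral_congr_fun measurableSet_Ioi
          fun ρ (hρ : 0 < ρ) => lintegral_Ioo_mul_comp_sqrt ha hρ.le,
          lintegral_const_mul' _ _ ENNReal.ofReal_ne_top, ← mul_assoc,
          ← ENNReal.ofReal_mul (by positivity), div_eq_mul_inv]

end Axial

/-- Polar-coordinate formula for convolutions of radial functions on `ℝ³`:
`∫ F(|ξ−ζ|) G(|ζ|) dζ = (2π/|ξ|) ∫₀^∞∫₀^∞ ρτ F(ρ)G(τ) 𝟙{|ρ−τ| ≤ |ξ| ≤ ρ+τ} dρ dτ`. -/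
theorem statement3 (F G : ℝ → ℝ≥0∞) (hF : Measurable F) (hG : Measurable G)
    (ξ : E3) (hξ : ξ ≠ 0) :
    ∫⁻ ζ, F ‖ξ - ζ‖ * G ‖ζ‖ =
      ENNReal.ofReal (2 * Real.pi / ‖ξ‖) *
        ∫⁻ ρ in Ioi (0 : ℝ), ∫⁻ τ in Ioi (0 : ℝ),
          (if |ρ - τ| ≤ ‖ξ‖ ∧ ‖ξ‖ ≤ ρ + τ then
            ENNReal.ofReal ρ * ENNReal.ofReal τ * F ρ * G τ else 0) := by
  set a := ‖ξ‖
  have hξa : ‖ξ‖ = ‖(!₂[a, 0, 0] : E3)‖ := by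
    simp [EuclideanSpace.norm_eq, Fin.sum_univ_three, a]
  rw [lintegral_norm_sub_eq_of_norm_eq (fun r s => F r * G s) hξa,
    lintegral_euclideanSpace_fin_three (by fun_prop),
    ← lintegral_axial_coordinates hF hG (norm_pos_iff.mpr hξ)]
  congr! with z y
  all_goals simp [EuclideanSpace.norm_eq, Fin.sum_univ_three, add_assoc, a]
end
end

section
/- Fix parameters (c_σ, b_σ), (c_μ, b_μ), (c_ν, b_ν) with c_σ, c_μ, c_ν > 0 and b_σ, b_μ, b_ν ∈ ℝ∖{0}, and let Φ⁺ be the associated one-dimensional phase. Then: (i) for every (α, β) ∈ ℝ² with (α, β) ≠ (0,0), at least one of the four quantities Φ⁺(α,β), ∂_βΦ⁺(α,β), ∂_β²Φ⁺(α,β), ∂_β³Φ⁺(α,β) is nonzero; (ii) consequently, for every K ≥ 1 there exists c > 0, depending on K and the parameters, such that max_{0 ≤ j ≤ 3} |∂_β^j Φ⁺(α,β)| ≥ c whenever |α|, |β|, |α−β| all lie in the interval [K^{−1}, K]. -/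
/-!
Each `Λ = Λ_τ` is a smooth square root of `c²x² + b²`. Differentiating `Λ² = c²x² + b²` gives
`ΛΛ' = c²x`, `Λ'² + ΛΛ'' = c²` and `3Λ'Λ'' + ΛΛ''' = 0`, and eliminating `Λ'` gives
`Λ³Λ'' = c²b² ≠ 0`.

Suppose `Φ⁺` and its first three `β`-derivatives vanish at `(α, β)`, and put `M = Λ_μ(α - β)`,
`N = Λ_ν(β)`. Then `Λ_σ(α) = M + N`, the first and third derivatives of the two terms agree and
their second derivatives are opposite, so adding the two third-order identities gives
`Λ_σ(α) Λ_μ'''(α - β) = 0`. As `Λ_σ` never vanishes, `Λ_μ''' = 0`, hence `Λ_μ'Λ_μ'' = 0` and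
`Λ_μ'(α - β) = Λ_ν'(β) = 0`, which forces `α - β = β = 0`.

The uniform bound follows by compactness: the largest of the `|∂_β^j Φ⁺|`, `j ≤ 3`, is continuous
and positive on the compact set `|α|, |β| ≤ K`, `|α| ≥ K⁻¹`.
-/

noncomputable section

/-- `Λ_τ(x) = sgn(b_τ)·√(c_τ² x² + b_τ²)` on the real line. -/
def Lam1 (c b x : ℝ) : ℝ := Real.sign b * Real.sqrt (c ^ 2 * x ^ 2 + b ^ 2)

/-- The one-dimensional phase `Φ⁺(α,β) = Λ_σ(α) − Λ_μ(α−β) − Λ_ν(β)`. -/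
def PhiP (cσ bσ cμ bμ cν bν α β : ℝ) : ℝ :=
  Lam1 cσ bσ α - Lam1 cμ bμ (α - β) - Lam1 cν bν β

theorem ContDiff.hasDerivAt_iteratedDeriv {𝕜 F : Type*} [NontriviallyNormedField 𝕜]
    [NormedAddCommGroup F] [NormedSpace 𝕜 F] {f : 𝕜 → F} {n m : ℕ} (hf : ContDiff 𝕜 n f)
    (hm : m < n) (x : 𝕜) : HasDerivAt (iteratedDeriv m f) (iteratedDeriv (m + 1) f x) x := by
  rw [iteratedDeriv_succ]
  exact (hf.differentiable_iteratedDeriv m (mod_cast hm) x).hasDerivAt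

section SqrtQuadratic

variable {f : ℝ → ℝ} {c b : ℝ}

theorem mul_deriv_eq_of_sq_eq (hf : Differentiable ℝ f)
    (hsq : ∀ x, f x ^ 2 = c ^ 2 * x ^ 2 + b ^ 2) (x : ℝ) :
    f x * deriv f x = c ^ 2 * x := by
  have hl : HasDerivAt (fun x => f x ^ 2) (2 * f x * deriv f x) x := by
    simpa using (hf x).hasDerivAt.fun_pow 2
  have hr : HasDerivAt (fun x => c ^ 2 * x ^ 2 + b ^ 2) (c ^ 2 * (2 * x)) x := by
    simpa using ((hasDerivAt_pow 2 x).const_mul (c ^ 2)).add_const (b ^ 2)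
  rw [funext hsq] at hl
  linarith [hl.unique hr]

theorem deriv_sq_add_mul_iteratedDeriv_two_of_sq_eq (hf : ContDiff ℝ 2 f)
    (hsq : ∀ x, f x ^ 2 = c ^ 2 * x ^ 2 + b ^ 2) (x : ℝ) :
    deriv f x ^ 2 + f x * iteratedDeriv 2 f x = c ^ 2 := by
  have h0 := hf.hasDerivAt_iteratedDeriv (m := 0) (by norm_num) x
  have h1 := hf.hasDerivAt_iteratedDeriv (m := 1) (by norm_num) x
  simp only [iteratedDeriv_zero, zero_add, iteratedDeriv_one] at h0 h1
  have hl : HasDerivAt (fun x => f x * deriv f x)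
      (deriv f x * deriv f x + f x * iteratedDeriv 2 f x) x := h0.mul h1
  rw [funext (mul_deriv_eq_of_sq_eq (hf.differentiable (by norm_num)) hsq)] at hl
  linear_combination hl.unique ((hasDerivAt_id x).const_mul (c ^ 2))

theorem three_mul_deriv_mul_iteratedDeriv_two_add_mul_iteratedDeriv_three_of_sq_eq
    (hf : ContDiff ℝ 3 f) (hsq : ∀ x, f x ^ 2 = c ^ 2 * x ^ 2 + b ^ 2) (x : ℝ) :
    3 * deriv f x * iteratedDeriv 2 f x + f x * iteratedDeriv 3 f x = 0 := by
  have h0 := hf.hasDerivAt_iteratedDeriv (m := 0) (by norm_num) x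
  have h1 := hf.hasDerivAt_iteratedDeriv (m := 1) (by norm_num) x
  have h2 := hf.hasDerivAt_iteratedDeriv (m := 2) (by norm_num) x
  simp only [iteratedDeriv_zero, zero_add, iteratedDeriv_one] at h0 h1 h2
  have hl : HasDerivAt (fun x => deriv f x * deriv f x + f x * iteratedDeriv 2 f x)
      (iteratedDeriv 2 f x * deriv f x + deriv f x * iteratedDeriv 2 f x +
        (deriv f x * iteratedDeriv 2 f x + f x * iteratedDeriv 3 f x)) x :=
    (h1.mul h1).add (h0.mul h2)
  have hsq' : ∀ x, deriv f x * deriv f x + f x * iteratedDeriv 2 f x = c ^ 2 := fun x => by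
    linear_combination deriv_sq_add_mul_iteratedDeriv_two_of_sq_eq (hf.of_le (by norm_num)) hsq x
  rw [funext hsq'] at hl
  linear_combination hl.unique (hasDerivAt_const x (c ^ 2))

theorem pow_three_mul_iteratedDeriv_two_of_sq_eq (hf : ContDiff ℝ 2 f)
    (hsq : ∀ x, f x ^ 2 = c ^ 2 * x ^ 2 + b ^ 2) (x : ℝ) :
    f x ^ 3 * iteratedDeriv 2 f x = c ^ 2 * b ^ 2 := by
  linear_combination f x ^ 2 * deriv_sq_add_mul_iteratedDeriv_two_of_sq_eq hf hsq x
    - (f x * deriv f x + c ^ 2 * x) * mul_deriv_eq_of_sq_eq (hf.differentiable (by norm_num)) hsq x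
    + c ^ 2 * hsq x

theorem eq_zero_of_iteratedDeriv_relations_of_sq_eq {g : ℝ → ℝ} {c' b' : ℝ}
    (hf : ContDiff ℝ 3 f) (hg : ContDiff ℝ 3 g) (hfsq : ∀ x, f x ^ 2 = c ^ 2 * x ^ 2 + b ^ 2)
    (hgsq : ∀ x, g x ^ 2 = c' ^ 2 * x ^ 2 + b' ^ 2) (hc : c ≠ 0) (hc' : c' ≠ 0) (hb : b ≠ 0)
    {u v : ℝ} (h0 : f u + g v ≠ 0) (h1 : deriv f u = deriv g v)
    (h2 : iteratedDeriv 2 f u = -iteratedDeriv 2 g v)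
    (h3 : iteratedDeriv 3 f u = iteratedDeriv 3 g v) : u = 0 ∧ v = 0 := by
  have odef := three_mul_deriv_mul_iteratedDeriv_two_add_mul_iteratedDeriv_three_of_sq_eq hf hfsq u
  have odeg := three_mul_deriv_mul_iteratedDeriv_two_add_mul_iteratedDeriv_three_of_sq_eq hg hgsq v
  have h3_eq_zero : iteratedDeriv 3 f u = 0 := by
    have : (f u + g v) * iteratedDeriv 3 f u = 0 := by
      linear_combination odef + odeg + g v * h3 - 3 * deriv f u * h2
        + 3 * iteratedDeriv 2 g v * h1
    exact (mul_eq_zero.mp this).resolve_left h0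
  have h2_ne_zero : iteratedDeriv 2 f u ≠ 0 := by
    refine right_ne_zero_of_mul (a := f u ^ 3) ?_
    rw [pow_three_mul_iteratedDeriv_two_of_sq_eq (hf.of_le (by norm_num)) hfsq]
    positivity
  have h1_eq_zero : deriv f u = 0 := by
    have : deriv f u * iteratedDeriv 2 f u = 0 := by
      linear_combination odef / 3 - f u / 3 * h3_eq_zero
    exact (mul_eq_zero.mp this).resolve_right h2_ne_zero
  have hu : c ^ 2 * u = 0 := by
    rw [← mul_deriv_eq_of_sq_eq (hf.differentiable (by norm_num)) hfsq, h1_eq_zero, mul_zero]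
  have hv : c' ^ 2 * v = 0 := by
    rw [← mul_deriv_eq_of_sq_eq (hg.differentiable (by norm_num)) hgsq, ← h1, h1_eq_zero,
      mul_zero]
  simp only [mul_eq_zero, pow_eq_zero_iff two_ne_zero, hc, hc', false_or] at hu hv
  exact ⟨hu, hv⟩

end SqrtQuadratic

section Lam1

variable {c b : ℝ}

@[fun_prop]
theorem continuous_Lam1 : Continuous (Lam1 c b) := by
  unfold Lam1
  fun_prop

theorem contDiff_Lam1 (hb : b ≠ 0) {n : WithTop ℕ∞} : ContDiff ℝ n (Lam1 c b) :=
  contDiff_const.mul <| (by fun_prop : ContDiff ℝ n fun x : ℝ => c ^ 2 * x ^ 2 + b ^ 2).sqrt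
    fun x => by positivity

theorem Lam1_sq (hb : b ≠ 0) (x : ℝ) : Lam1 c b x ^ 2 = c ^ 2 * x ^ 2 + b ^ 2 := by
  have hs : Real.sign b ^ 2 = 1 := by
    rcases Real.sign_apply_eq_of_ne_zero b hb with h | h <;> simp [h]
  rw [Lam1, mul_pow, hs, one_mul, Real.sq_sqrt (by positivity)]

theorem Lam1_ne_zero (hb : b ≠ 0) (x : ℝ) : Lam1 c b x ≠ 0 := by
  rw [← pow_ne_zero_iff two_ne_zero, Lam1_sq hb]
  positivity

end Lam1

section PhiP

variable {cσ bσ cμ bμ cν bν : ℝ}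

theorem iteratedDeriv_succ_PhiP (hbμ : bμ ≠ 0) (hbν : bν ≠ 0) (n : ℕ) (α β : ℝ) :
    iteratedDeriv (n + 1) (fun y => PhiP cσ bσ cμ bμ cν bν α y) β =
      (-1) ^ n * iteratedDeriv (n + 1) (Lam1 cμ bμ) (α - β) -
        iteratedDeriv (n + 1) (Lam1 cν bν) β := by
  have hΦ : (fun y => PhiP cσ bσ cμ bμ cν bν α y) =
      fun y => Lam1 cσ bσ α - (Lam1 cμ bμ (α - y) + Lam1 cν bν y) := by
    funext y
    rw [PhiP]
    ring
  have hμ : ContDiffAt ℝ (n + 1) (fun y => Lam1 cμ bμ (α - y)) β :=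
    ((contDiff_Lam1 hbμ).comp (contDiff_const.sub contDiff_id)).contDiffAt
  rw [hΦ, iteratedDeriv_const_sub (by omega : 0 < n + 1), iteratedDeriv_neg,
    iteratedDeriv_fun_add hμ (contDiff_Lam1 hbν).contDiffAt, iteratedDeriv_comp_const_sub]
  simp only [smul_eq_mul]
  ring

theorem continuous_iteratedDeriv_PhiP (hbμ : bμ ≠ 0) (hbν : bν ≠ 0) (n : ℕ) :
    Continuous fun p : ℝ × ℝ => iteratedDeriv n (fun y => PhiP cσ bσ cμ bμ cν bν p.1 y) p.2 := by
  cases n with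
  | zero =>
    simp only [iteratedDeriv_zero, PhiP]
    fun_prop
  | succ n =>
    simp only [iteratedDeriv_succ_PhiP hbμ hbν]
    have hμ := (contDiff_Lam1 (c := cμ) hbμ (n := ⊤)).continuous_iteratedDeriv (n + 1) le_top
    have hν := (contDiff_Lam1 (c := cν) hbν (n := ⊤)).continuous_iteratedDeriv (n + 1) le_top
    fun_prop

theorem eq_zero_of_iteratedDeriv_PhiP_eq_zero (hcμ : cμ ≠ 0) (hcν : cν ≠ 0) (hbσ : bσ ≠ 0)
    (hbμ : bμ ≠ 0) (hbν : bν ≠ 0) {α β : ℝ}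
    (h : ∀ j ≤ 3, iteratedDeriv j (fun y => PhiP cσ bσ cμ bμ cν bν α y) β = 0) :
    α = 0 ∧ β = 0 := by
  have hΦ : ∀ n < 3, (-1) ^ n * iteratedDeriv (n + 1) (Lam1 cμ bμ) (α - β) =
      iteratedDeriv (n + 1) (Lam1 cν bν) β := fun n hn => by
    rw [← sub_eq_zero, ← iteratedDeriv_succ_PhiP hbμ hbν]
    exact h (n + 1) (by omega)
  have hσ : Lam1 cμ bμ (α - β) + Lam1 cν bν β = Lam1 cσ bσ α := by
    rw [← sub_eq_zero, ← neg_eq_zero, ← h 0 (by norm_num), iteratedDeriv_zero, PhiP]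
    ring
  obtain ⟨hαβ, hβ⟩ := eq_zero_of_iteratedDeriv_relations_of_sq_eq (contDiff_Lam1 hbμ)
    (contDiff_Lam1 hbν) (Lam1_sq hbμ) (Lam1_sq hbν) hcμ hcν hbμ (hσ ▸ Lam1_ne_zero hbσ α)
    (by simpa using hΦ 0 (by norm_num)) (by linear_combination -hΦ 1 (by norm_num))
    (by linear_combination hΦ 2 (by norm_num))
  exact ⟨by linarith, hβ⟩

end PhiP

theorem IsCompact.exists_pos_forall_exists_le_abs {X ι : Type*} [TopologicalSpace X] {S : Set X}
    (hS : IsCompact S) {s : Finset ι} {F : ι → X → ℝ} (hF : ∀ i ∈ s, ContinuousOn (F i) S)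
    (hne : ∀ p ∈ S, ∃ i ∈ s, F i p ≠ 0) : ∃ c > 0, ∀ p ∈ S, ∃ i ∈ s, c ≤ |F i p| := by
  rcases s.eq_empty_or_nonempty with rfl | hs
  · exact ⟨1, one_pos, fun p hp => by simpa using hne p hp⟩
  have hG : ContinuousOn (fun p => s.sup' hs fun i => |F i p|) S :=
    ContinuousOn.finset_sup'_apply hs fun i hi => (hF i hi).abs
  obtain ⟨c, hc, hcG⟩ := hS.exists_forall_le' hG (a := 0) fun p hp => by
    obtain ⟨i, hi, hFi⟩ := hne p hp
    exact (Finset.lt_sup'_iff hs).mpr ⟨i, hi, abs_pos.mpr hFi⟩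
  exact ⟨c, hc, fun p hp => (Finset.le_sup'_iff hs).mp (hcG p hp)⟩

theorem statement5_general (cσ bσ cμ bμ cν bν : ℝ)
    (hcμ : 0 < cμ) (hcν : 0 < cν)
    (hbσ : bσ ≠ 0) (hbμ : bμ ≠ 0) (hbν : bν ≠ 0) :
    (∀ α β : ℝ, ¬(α = 0 ∧ β = 0) →
      ∃ j ≤ 3, iteratedDeriv j (fun y => PhiP cσ bσ cμ bμ cν bν α y) β ≠ 0) ∧
    (∀ K : ℝ, 1 ≤ K → ∃ c : ℝ, 0 < c ∧
      ∀ α β : ℝ,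
        |α| ∈ Set.Icc K⁻¹ K → |β| ∈ Set.Icc K⁻¹ K → |α - β| ∈ Set.Icc K⁻¹ K →
        ∃ j ≤ 3, c ≤ |iteratedDeriv j (fun y => PhiP cσ bσ cμ bμ cν bν α y) β|) := by
  have hvanish : ∀ α β : ℝ, ¬(α = 0 ∧ β = 0) →
      ∃ j ≤ 3, iteratedDeriv j (fun y => PhiP cσ bσ cμ bμ cν bν α y) β ≠ 0 := by
    intro α β hαβ
    by_contra! h
    exact hαβ (eq_zero_of_iteratedDeriv_PhiP_eq_zero hcμ.ne' hcν.ne' hbσ hbμ hbν h)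
  refine ⟨hvanish, fun K hK => ?_⟩
  have hK₀ : 0 < K⁻¹ := inv_pos.mpr (zero_lt_one.trans_le hK)
  set S : Set (ℝ × ℝ) := (Set.Icc (-K) K ×ˢ Set.Icc (-K) K) ∩ {p | K⁻¹ ≤ |p.1|}
  have hS : IsCompact S := (isCompact_Icc.prod isCompact_Icc).inter_right
    (isClosed_le continuous_const continuous_fst.abs)
  obtain ⟨c, hc, hcS⟩ := hS.exists_pos_forall_exists_le_abs (s := Finset.Iic 3)
    (fun j _ => (continuous_iteratedDeriv_PhiP hbμ hbν j).continuousOn) fun p hp => by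
      obtain ⟨j, hj, hΦj⟩ := hvanish p.1 p.2 fun h => by simpa [h.1] using hK₀.trans_le hp.2
      exact ⟨j, Finset.mem_Iic.mpr hj, hΦj⟩
  refine ⟨c, hc, fun α β hα hβ _ => ?_⟩
  obtain ⟨j, hj, hcj⟩ := hcS (α, β) ⟨⟨abs_le.mp hα.2, abs_le.mp hβ.2⟩, hα.1⟩
  exact ⟨j, Finset.mem_Iic.mp hj, hcj⟩

/-- Non-degeneracy of the one-dimensional phase: some `β`-derivative of order
at most `3` is nonzero away from the origin, with a uniform lower bound on
compact frequency annuli. -/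
theorem statement5 (cσ bσ cμ bμ cν bν : ℝ)
    (hcσ : 0 < cσ) (hcμ : 0 < cμ) (hcν : 0 < cν)
    (hbσ : bσ ≠ 0) (hbμ : bμ ≠ 0) (hbν : bν ≠ 0) :
    (∀ α β : ℝ, ¬(α = 0 ∧ β = 0) →
      ∃ j ≤ 3, iteratedDeriv j (fun y => PhiP cσ bσ cμ bμ cν bν α y) β ≠ 0) ∧
    (∀ K : ℝ, 1 ≤ K → ∃ c : ℝ, 0 < c ∧
      ∀ α β : ℝ,
        |α| ∈ Set.Icc K⁻¹ K → |β| ∈ Set.Icc K⁻¹ K → |α - β| ∈ Set.Icc K⁻¹ K →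
        ∃ j ≤ 3, c ≤ |iteratedDeriv j (fun y => PhiP cσ bσ cμ bμ cν bν α y) β|) :=
  statement5_general cσ bσ cμ bμ cν bν hcμ hcν hbσ hbμ hbν
end
end

section
/- Fix c > 0 and b_σ, b_μ, b_ν > 0, and let Φ be the associated equal-speed phase. If b_σ ≠ b_μ + b_ν, then there is no pair (ξ, η) ∈ ℝ³ × ℝ³ with Φ(ξ,η) = 0 and ∇_ηΦ(ξ,η) = 0. If b_σ = b_μ + b_ν, then the spacetime resonance set {(ξ,η) ∈ ℝ³ × ℝ³ : Φ(ξ,η) = 0 and ∇_ηΦ(ξ,η) = 0} is exactly the set {(ξ, ρξ) : ξ ∈ ℝ³}, where ρ = b_ν/b_σ. -/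
noncomputable section

/-- `Λ_τ(ξ) = √(c²|ξ|² + b_τ²)` (equal speeds, positive masses). -/
def LamP (c b : ℝ) (ξ : E3) : ℝ := Real.sqrt (c ^ 2 * ‖ξ‖ ^ 2 + b ^ 2)

/-- The equal-speed phase `Φ(ξ,η) = Λ_σ(ξ) − Λ_μ(ξ−η) − Λ_ν(η)`. -/
def PhiEq (c bσ bμ bν : ℝ) (ξ η : E3) : ℝ :=
  LamP c bσ ξ - LamP c bμ (ξ - η) - LamP c bν η

/-! The gradient condition `∇_ηΦ = 0` says `(ξ - η)/Λ_μ(ξ - η) = η/Λ_ν(η)`, so `ξ - η = r η`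
with `r = Λ_μ(ξ - η)/Λ_ν(η) > 0`, and `ξ = (1 + r) η`. For `t ≥ 0` the scaling identity
`Λ_b(t v) = t Λ_d(v)` holds exactly when `b = t d`; applied to `Λ_μ(r η) = r Λ_ν(η)` it gives
`b_μ = r b_ν`, and applied to `Φ = 0`, i.e. `Λ_σ((1 + r) η) = (1 + r) Λ_ν(η)`, it gives
`b_σ = (1 + r) b_ν = b_μ + b_ν` and `η = (b_ν/b_σ) ξ`. Conversely, the same identity makes every
`(ξ, (b_ν/b_σ) ξ)` resonant when `b_σ = b_μ + b_ν`. -/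

lemma lamP_pos (c : ℝ) {b : ℝ} (hb : b ≠ 0) (v : E3) : 0 < LamP c b v :=
  Real.sqrt_pos.mpr (by positivity)

lemma lamP_smul (c d : ℝ) {t : ℝ} (ht : 0 ≤ t) (v : E3) :
    LamP c (t * d) (t • v) = t * LamP c d v := by
  rw [LamP, LamP, norm_smul, Real.norm_of_nonneg ht,
    show c ^ 2 * (t * ‖v‖) ^ 2 + (t * d) ^ 2 = t ^ 2 * (c ^ 2 * ‖v‖ ^ 2 + d ^ 2) by ring,
    Real.sqrt_mul (sq_nonneg t), Real.sqrt_sq ht]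

lemma lamP_inj_left (c : ℝ) {b b' : ℝ} (hb : 0 ≤ b) (hb' : 0 ≤ b') (v : E3) :
    LamP c b v = LamP c b' v ↔ b = b' := by
  rw [LamP, LamP, Real.sqrt_inj (by positivity) (by positivity), add_right_inj,
    pow_left_inj₀ hb hb' two_ne_zero]

lemma lamP_smul_eq_mul_iff (c : ℝ) {b d t : ℝ} (hb : 0 ≤ b) (hd : 0 ≤ d) (ht : 0 ≤ t) (v : E3) :
    LamP c b (t • v) = t * LamP c d v ↔ b = t * d := by
  rw [← lamP_smul c d ht, lamP_inj_left c hb (mul_nonneg ht hd)]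

lemma hasGradientAt_lamP (c : ℝ) {b : ℝ} (hb : b ≠ 0) (v : E3) :
    HasGradientAt (LamP c b) ((c ^ 2 / LamP c b v) • v) v := by
  have hpos : c ^ 2 * ‖v‖ ^ 2 + b ^ 2 ≠ 0 := by positivity
  refine hasGradientAt_iff_hasFDerivAt.mpr <|
    ((((hasStrictFDerivAt_norm_sq v).hasFDerivAt.const_mul (c ^ 2)).add_const
      (b ^ 2)).sqrt hpos).congr_fderiv ?_
  ext w
  simp only [LamP, one_div, mul_inv_rev, smul_apply, coe_innerSL_apply,
    nsmul_eq_mul, Nat.cast_ofNat, smul_eq_mul, map_smul, InnerProductSpace.toDual_apply_apply]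
  field_simp

lemma hasGradientAt_phiEq (c bσ : ℝ) {bμ bν : ℝ} (hμ : bμ ≠ 0) (hν : bν ≠ 0) (ξ η : E3) :
    HasGradientAt (PhiEq c bσ bμ bν ξ)
      ((c ^ 2 / LamP c bμ (ξ - η)) • (ξ - η) - (c ^ 2 / LamP c bν η) • η) η := by
  have hμ' := (hasGradientAt_iff_hasFDerivAt.mp (hasGradientAt_lamP c hμ (ξ - η))).comp η
      ((hasFDerivAt_id η).const_sub ξ)
  have hν' := hasGradientAt_iff_hasFDerivAt.mp (hasGradientAt_lamP c hν η)
  refine hasGradientAt_iff_hasFDerivAt.mpr <|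
    (((hasFDerivAt_const (LamP c bσ ξ) η).sub hμ').sub hν').congr_fderiv ?_
  ext w
  simp

lemma eq_add_and_eq_smul_of_resonance {c bσ bμ bν : ℝ} (hc : c ≠ 0) (hσ : 0 < bσ) (hμ : 0 < bμ)
    (hν : 0 < bν) {ξ η : E3} (hΦ : PhiEq c bσ bμ bν ξ η = 0)
    (hgrad : (c ^ 2 / LamP c bμ (ξ - η)) • (ξ - η) - (c ^ 2 / LamP c bν η) • η = 0) :
    bσ = bμ + bν ∧ η = (bν / bσ) • ξ := by
  set A := LamP c bμ (ξ - η)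
  set B := LamP c bν η
  have hA : 0 < A := lamP_pos c hμ.ne' _
  have hB : 0 < B := lamP_pos c hν.ne' _
  set r := A / B
  have hr : 0 < r := div_pos hA hB
  have hAB : A = r * B := (div_mul_cancel₀ A hB.ne').symm
  have hsub : ξ - η = r • η := by
    calc ξ - η = (A / c ^ 2) • ((c ^ 2 / A) • (ξ - η)) := by
          rw [smul_smul, div_mul_div_cancel₀ (pow_ne_zero 2 hc), div_self hA.ne', one_smul]
      _ = (A / c ^ 2) • ((c ^ 2 / B) • η) := by rw [sub_eq_zero.mp hgrad]
      _ = r • η := by rw [smul_smul, div_mul_div_cancel₀ (pow_ne_zero 2 hc)]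
  have hξ : ξ = (r + 1) • η := by rw [add_smul, one_smul, ← hsub, sub_add_cancel]
  have hμr : bμ = r * bν := by
    rw [← lamP_smul_eq_mul_iff c hμ.le hν.le hr.le, ← hsub]
    exact hAB
  have hσr : bσ = (r + 1) * bν := by
    rw [← lamP_smul_eq_mul_iff c hσ.le hν.le (by positivity), ← hξ]
    have : LamP c bσ ξ = A + B := by unfold PhiEq at hΦ; linarith
    rw [this, hAB]; ring
  refine ⟨by linarith, ?_⟩
  rw [hξ, smul_smul, hσr, div_mul_eq_mul_div, mul_comm, div_self (by positivity), one_smul]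

lemma resonance_of_eq_add {c bσ bμ bν : ℝ} (hσ : 0 < bσ) (hμ : 0 < bμ) (hν : 0 < bν)
    (hb : bσ = bμ + bν) (ξ : E3) :
    PhiEq c bσ bμ bν ξ ((bν / bσ) • ξ) = 0 ∧
      (c ^ 2 / LamP c bμ (ξ - (bν / bσ) • ξ)) • (ξ - (bν / bσ) • ξ)
        - (c ^ 2 / LamP c bν ((bν / bσ) • ξ)) • ((bν / bσ) • ξ) = 0 := by
  have hsub : ξ - (bν / bσ) • ξ = (bμ / bσ) • ξ := by
    have hμσ : bμ / bσ = 1 - bν / bσ := by rw [hb]; field_simp; ring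
    rw [hμσ, sub_smul, one_smul]
  have hΛ : ∀ {b : ℝ}, 0 < b → LamP c b ((b / bσ) • ξ) = b / bσ * LamP c bσ ξ := fun h0 =>
    (lamP_smul_eq_mul_iff c h0.le hσ.le (by positivity) ξ).mpr (div_mul_cancel₀ _ hσ.ne').symm
  rw [PhiEq, hsub, hΛ hμ, hΛ hν, smul_smul, smul_smul, sub_eq_zero (b := _ • ξ)]
  constructor
  · rw [hb]; field_simp; ring
  · congr 1; field_simp

theorem phiEq_eq_zero_and_gradient_eq_zero_iff {c bσ bμ bν : ℝ} (hc : c ≠ 0) (hσ : 0 < bσ)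
    (hμ : 0 < bμ) (hν : 0 < bν) (ξ η : E3) :
    PhiEq c bσ bμ bν ξ η = 0 ∧ gradient (PhiEq c bσ bμ bν ξ) η = 0 ↔
      bσ = bμ + bν ∧ η = (bν / bσ) • ξ := by
  rw [(hasGradientAt_phiEq c bσ hμ.ne' hν.ne' ξ η).gradient]
  refine ⟨fun h => eq_add_and_eq_smul_of_resonance hc hσ hμ hν h.1 h.2, ?_⟩
  rintro ⟨hb, rfl⟩
  exact resonance_of_eq_add hσ hμ hν hb ξ

/-- Spacetime resonance set in the equal-speed case: empty when
`b_σ ≠ b_μ + b_ν`, and exactly the line bundle `{(ξ, ρξ)}` with `ρ = b_ν/b_σ`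
when `b_σ = b_μ + b_ν`. -/
theorem statement9 (c bσ bμ bν : ℝ) (hc : 0 < c)
    (hσ : 0 < bσ) (hμ : 0 < bμ) (hν : 0 < bν) :
    (bσ ≠ bμ + bν → ∀ ξ η : E3,
      ¬(PhiEq c bσ bμ bν ξ η = 0 ∧
        gradient (fun y => PhiEq c bσ bμ bν ξ y) η = 0)) ∧
    (bσ = bμ + bν →
      {p : E3 × E3 | PhiEq c bσ bμ bν p.1 p.2 = 0 ∧
          gradient (fun y => PhiEq c bσ bμ bν p.1 y) p.2 = 0} =
        {p : E3 × E3 | p.2 = (bν / bσ) • p.1}) := by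
  have key := phiEq_eq_zero_and_gradient_eq_zero_iff hc.ne' hσ hμ hν
  refine ⟨fun hne ξ η h => hne ((key ξ η).mp h).1, fun hb => ?_⟩
  ext ⟨ξ, η⟩
  simpa [hb] using key ξ η

end
end

section
/- Fix c > 0 and b_σ, b_μ, b_ν > 0 with b_σ = b_μ + b_ν, let Φ be the associated equal-speed phase, and set ρ = b_ν/b_σ. Then there exists a constant C ≥ 1, depending only on c, b_σ, b_μ, b_ν, such that for all ξ, η ∈ ℝ³: C^{−1} (1 + |ξ| + |η|)^{−5} |η − ρξ| ≤ |∇_ηΦ(ξ,η)| ≤ C |η − ρξ|. -/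
noncomputable section

/-!
Let `V(x) = c²x / √(c²|x|² + 1)` be the gradient of `Λ(x) = √(c²|x|² + 1)`. By scaling,
`∇Λ_b(x) = V(x / b)`, so `∇_ηΦ(ξ, η) = V(x) - V(y)` with `x = (ξ - η) / b_μ`, `y = η / b_ν`, and
`b_σ = b_μ + b_ν` gives `y - x = (1 / b_μ + 1 / b_ν) (η - ρξ)`. The upper bound is then the
Lipschitz continuity of `V`. For the lower bound, `Λ` is uniformly convex on bounded sets:
`⟪V(x) - V(y), x - y⟫ ≥ c²|x - y|² / (Λ(x) Λ(y) (Λ(x) + Λ(y)))`, and with Cauchy–Schwarz this gives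
`|V(x) - V(y)| ≳ (1 + |ξ| + |η|)⁻³ |η - ρξ|`.
-/

open RealInnerProductSpace

lemma abs_sqrt_sq_add_sub_sqrt_sq_add_le (p q b : ℝ) :
    |√(p ^ 2 + b ^ 2) - √(q ^ 2 + b ^ 2)| ≤ |p - q| := by
  suffices key : ∀ p q : ℝ, √(p ^ 2 + b ^ 2) ≤ √(q ^ 2 + b ^ 2) + |p - q| by
    rw [abs_sub_le_iff]
    constructor
    · linarith [key p q]
    · linarith [key q p, abs_sub_comm p q]
  intro p q
  have hq : |q| ≤ √(q ^ 2 + b ^ 2) := Real.abs_le_sqrt (by nlinarith)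
  rw [Real.sqrt_le_iff]
  refine ⟨by positivity, ?_⟩
  nlinarith [Real.sq_sqrt (by positivity : 0 ≤ q ^ 2 + b ^ 2), abs_mul_abs_self (p - q),
    abs_mul_abs_self q, abs_nonneg (p - q), le_abs_self (q * (p - q)), abs_mul q (p - q)]

section dispersion

variable {E : Type*} [SeminormedAddCommGroup E]

/-- `LamP`, on an arbitrary seminormed group. -/
def dispersion (c b : ℝ) (x : E) : ℝ := √(c ^ 2 * ‖x‖ ^ 2 + b ^ 2)

variable (c : ℝ) {b : ℝ}

lemma sq_dispersion (x : E) : dispersion c b x ^ 2 = c ^ 2 * ‖x‖ ^ 2 + b ^ 2 :=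
  Real.sq_sqrt (by positivity)

lemma dispersion_pos (hb : b ≠ 0) (x : E) : 0 < dispersion c b x :=
  Real.sqrt_pos.mpr (by positivity)

lemma abs_le_dispersion (x : E) : |b| ≤ dispersion c b x :=
  Real.abs_le_sqrt (by nlinarith [sq_nonneg (c * ‖x‖)])

lemma abs_mul_norm_le_dispersion (x : E) : |c| * ‖x‖ ≤ dispersion c b x := by
  rw [← abs_norm, ← abs_mul]
  exact Real.abs_le_sqrt (by nlinarith [sq_nonneg b])

lemma dispersion_le_mul {K X : ℝ} (hc : 0 ≤ c) (hb : 0 ≤ b) (hX : 1 ≤ X) {x : E}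
    (hx : ‖x‖ ≤ K * X) : dispersion c b x ≤ (c * K + b) * X := by
  have hcb : dispersion c b x ≤ c * ‖x‖ + b :=
    Real.sqrt_le_iff.mpr ⟨by positivity, by nlinarith [mul_nonneg (mul_nonneg hc hb) (norm_nonneg x)]⟩
  nlinarith [mul_le_mul_of_nonneg_left hx hc]

lemma abs_dispersion_sub_le (x y : E) :
    |dispersion c b x - dispersion c b y| ≤ |c| * ‖x - y‖ := by
  have h := abs_sqrt_sq_add_sub_sqrt_sq_add_le (c * ‖x‖) (c * ‖y‖) b
  simp only [mul_pow] at h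
  calc _ ≤ |c * ‖x‖ - c * ‖y‖| := h
    _ = |c| * |‖x‖ - ‖y‖| := by rw [← mul_sub, abs_mul]
    _ ≤ |c| * ‖x - y‖ := by gcongr; exact abs_norm_sub_norm_le x y

lemma dispersion_mul_smul [NormedSpace ℝ E] {t : ℝ} (ht : 0 < t) (x : E) :
    dispersion c (t * b) (t • x) = t * dispersion c b x := by
  rw [dispersion, dispersion, norm_smul, Real.norm_of_nonneg ht.le,
    show c ^ 2 * (t * ‖x‖) ^ 2 + (t * b) ^ 2 = t ^ 2 * (c ^ 2 * ‖x‖ ^ 2 + b ^ 2) by ring,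
    Real.sqrt_mul (by positivity), Real.sqrt_sq ht.le]

end dispersion

section groupVelocity

variable {E : Type*} [NormedAddCommGroup E] [InnerProductSpace ℝ E]

def groupVelocity (c b : ℝ) (x : E) : E := (c ^ 2 / dispersion c b x) • x

variable (c : ℝ) {b : ℝ}

lemma hasGradientAt_dispersion [CompleteSpace E] (hb : b ≠ 0) (x : E) :
    HasGradientAt (dispersion c b) (groupVelocity c b x) x := by
  have hpos : c ^ 2 * ‖x‖ ^ 2 + b ^ 2 ≠ 0 := by positivity
  rw [hasGradientAt_iff_hasFDerivAt]
  refine ((((hasStrictFDerivAt_norm_sq x).hasFDerivAt.const_mul (c ^ 2)).add_const (b ^ 2)).sqrt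
    hpos).congr_fderiv ?_
  ext y
  have := dispersion_pos c hb x
  simp only [groupVelocity, map_smul, InnerProductSpace.toDual_apply_apply, smul_apply,
    coe_innerSL_apply, nsmul_eq_mul, Nat.cast_ofNat, smul_eq_mul]
  unfold dispersion at *
  field_simp

lemma groupVelocity_eq_inv_smul (hb : 0 < b) (x : E) :
    groupVelocity c b x = groupVelocity c 1 (b⁻¹ • x) := by
  have h : dispersion c b x = b * dispersion c 1 (b⁻¹ • x) := by
    rw [← dispersion_mul_smul c hb, mul_one, smul_inv_smul₀ hb.ne']
  rw [groupVelocity, groupVelocity, h, smul_smul]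
  congr 1
  field_simp

lemma norm_groupVelocity_sub_le (hb : b ≠ 0) (x y : E) :
    ‖groupVelocity c b x - groupVelocity c b y‖ ≤ 2 * c ^ 2 / |b| * ‖x - y‖ := by
  set Lx := dispersion c b x
  set Ly := dispersion c b y
  have hb' : 0 < |b| := abs_pos.mpr hb
  have hLx : |b| ≤ Lx := abs_le_dispersion c x
  have hLx0 : 0 < Lx := hb'.trans_le hLx
  have hLy0 : 0 < Ly := dispersion_pos c hb y
  have hcy : |c| * ‖y‖ ≤ Ly := abs_mul_norm_le_dispersion c y
  have hsplit : groupVelocity c b x - groupVelocity c b y =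
      (c ^ 2 / Lx) • (x - y) + (c ^ 2 / Lx - c ^ 2 / Ly) • y := by
    simp only [groupVelocity, smul_sub, sub_smul]; abel
  have h1 : ‖(c ^ 2 / Lx) • (x - y)‖ ≤ c ^ 2 / |b| * ‖x - y‖ := by
    rw [norm_smul, Real.norm_of_nonneg (by positivity)]
    gcongr
  have h2 : ‖(c ^ 2 / Lx - c ^ 2 / Ly) • y‖ ≤ c ^ 2 / |b| * ‖x - y‖ := by
    have e : c ^ 2 / Lx - c ^ 2 / Ly = c ^ 2 * (Ly - Lx) / (Lx * Ly) := by field_simp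
    rw [norm_smul, Real.norm_eq_abs, e, abs_div, abs_mul, abs_of_nonneg (sq_nonneg c),
      abs_of_pos (by positivity : 0 < Lx * Ly), abs_sub_comm]
    calc c ^ 2 * |Lx - Ly| / (Lx * Ly) * ‖y‖
        ≤ c ^ 2 * (|c| * ‖x - y‖) / (Lx * Ly) * ‖y‖ := by
          gcongr; exact abs_dispersion_sub_le c x y
      _ = c ^ 2 / Lx * ‖x - y‖ * (|c| * ‖y‖ / Ly) := by ring
      _ ≤ c ^ 2 / |b| * ‖x - y‖ * 1 := by
          gcongr
          exact (div_le_one hLy0).mpr hcy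
      _ = c ^ 2 / |b| * ‖x - y‖ := mul_one _
  calc _ ≤ _ := hsplit ▸ norm_add_le _ _
    _ ≤ c ^ 2 / |b| * ‖x - y‖ + c ^ 2 / |b| * ‖x - y‖ := add_le_add h1 h2
    _ = 2 * c ^ 2 / |b| * ‖x - y‖ := by ring

lemma two_mul_inner_smul_sub_smul_sub (a a' : ℝ) (x y : E) :
    2 * ⟪a • x - a' • y, x - y⟫ = (a + a') * ‖x - y‖ ^ 2 + (a - a') * (‖x‖ ^ 2 - ‖y‖ ^ 2) := by
  rw [← real_inner_self_eq_norm_sq, ← real_inner_self_eq_norm_sq x, ← real_inner_self_eq_norm_sq y]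
  simp only [inner_sub_left, inner_sub_right, real_inner_smul_left, real_inner_comm x y]
  ring

lemma inner_groupVelocity_sub_ge (hb : b ≠ 0) (x y : E) :
    c ^ 2 * b ^ 2 * ‖x - y‖ ^ 2 /
        (dispersion c b x * dispersion c b y * (dispersion c b x + dispersion c b y)) ≤
      ⟪groupVelocity c b x - groupVelocity c b y, x - y⟫ := by
  have hx := sq_dispersion c (b := b) x
  have hy := sq_dispersion c (b := b) y
  have hLx := dispersion_pos c hb x
  have hLy := dispersion_pos c hb y
  have hcx := abs_mul_norm_le_dispersion c (b := b) x
  have hcy := abs_mul_norm_le_dispersion c (b := b) y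
  have hxy : |‖x‖ - ‖y‖| ≤ ‖x - y‖ := abs_norm_sub_norm_le x y
  have h2 := two_mul_inner_smul_sub_smul_sub (c ^ 2 / dispersion c b x) (c ^ 2 / dispersion c b y) x y
  set Lx := dispersion c b x
  set Ly := dispersion c b y
  set n := ‖x - y‖
  set X := ‖x‖
  set Y := ‖y‖
  have hprod : c ^ 2 * (X * Y) ≤ Lx * Ly := by
    have := mul_le_mul hcx hcy (by positivity) hLx.le
    rwa [mul_mul_mul_comm, ← abs_mul, abs_mul_self, ← sq] at this
  have hsq : (Lx ^ 2 - Ly ^ 2) ^ 2 ≤ c ^ 4 * n ^ 2 * (X + Y) ^ 2 := by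
    have hXY : (X - Y) ^ 2 ≤ n ^ 2 := sq_le_sq' (abs_le.mp hxy).1 (abs_le.mp hxy).2
    calc (Lx ^ 2 - Ly ^ 2) ^ 2 = c ^ 4 * (X - Y) ^ 2 * (X + Y) ^ 2 := by rw [hx, hy]; ring
      _ ≤ c ^ 4 * n ^ 2 * (X + Y) ^ 2 := by gcongr
  rw [div_le_iff₀ (by positivity)]
  have hinner : ⟪groupVelocity c b x - groupVelocity c b y, x - y⟫ * (Lx * Ly * (Lx + Ly)) =
      (c ^ 2 * (Lx + Ly) ^ 2 * n ^ 2 - (Lx ^ 2 - Ly ^ 2) ^ 2) / 2 := by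
    rw [groupVelocity, groupVelocity, eq_div_iff two_ne_zero, mul_right_comm, mul_comm _ 2, h2]
    rw [show (c ^ 2 / Lx - c ^ 2 / Ly) * (X ^ 2 - Y ^ 2) = (1 / Lx - 1 / Ly) * (Lx ^ 2 - Ly ^ 2) by
      rw [hx, hy]; field_simp; ring]
    field_simp
    ring
  have hsum : 2 * b ^ 2 + c ^ 2 * (X + Y) ^ 2 ≤ (Lx + Ly) ^ 2 := by nlinarith
  rw [hinner]
  nlinarith [mul_le_mul_of_nonneg_left hsum (by positivity : 0 ≤ c ^ 2 * n ^ 2)]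

lemma norm_groupVelocity_sub_ge (hb : b ≠ 0) (x y : E) :
    c ^ 2 * b ^ 2 * ‖x - y‖ /
        (dispersion c b x * dispersion c b y * (dispersion c b x + dispersion c b y)) ≤
      ‖groupVelocity c b x - groupVelocity c b y‖ := by
  rcases (norm_nonneg (x - y)).eq_or_lt with h0 | h0
  · rw [← h0]; simp
  refine le_of_mul_le_mul_right ?_ h0
  calc _ = c ^ 2 * b ^ 2 * ‖x - y‖ ^ 2 /
        (dispersion c b x * dispersion c b y * (dispersion c b x + dispersion c b y)) := by ring
    _ ≤ ⟪groupVelocity c b x - groupVelocity c b y, x - y⟫ := inner_groupVelocity_sub_ge c hb x y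
    _ ≤ _ := real_inner_le_norm _ _

lemma norm_groupVelocity_sub_ge_of_norm_le (hc : 0 ≤ c) (hb : 0 < b) {K X : ℝ} (hX : 1 ≤ X)
    {x y : E} (hx : ‖x‖ ≤ K * X) (hy : ‖y‖ ≤ K * X) :
    c ^ 2 * b ^ 2 / (2 * (c * K + b) ^ 3) * X ^ (-3 : ℤ) * ‖x - y‖ ≤
      ‖groupVelocity c b x - groupVelocity c b y‖ := by
  have hK : 0 ≤ K := nonneg_of_mul_nonneg_left ((norm_nonneg x).trans hx) (by linarith)
  have hcKb : 0 < c * K + b := by positivity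
  have hLx := dispersion_pos c hb.ne' x
  have hLy := dispersion_pos c hb.ne' y
  have hx' := dispersion_le_mul c hc hb.le hX hx
  have hy' := dispersion_le_mul c hc hb.le hX hy
  have hden : dispersion c b x * dispersion c b y * (dispersion c b x + dispersion c b y) ≤
      2 * ((c * K + b) * X) ^ 3 := by
    nlinarith [mul_le_mul hx' hy' hLy.le (hLx.le.trans hx')]
  calc _ = c ^ 2 * b ^ 2 * ‖x - y‖ / (2 * ((c * K + b) * X) ^ 3) := by
        rw [zpow_neg, zpow_ofNat]; field_simp
    _ ≤ _ := div_le_div_of_nonneg_left (by positivity) (by positivity) hden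
    _ ≤ _ := norm_groupVelocity_sub_ge c hb.ne' x y

end groupVelocity

lemma gradient_phiEq (c : ℝ) {bσ bμ bν : ℝ} (hμ : bμ ≠ 0) (hν : bν ≠ 0) (ξ η : E3) :
    gradient (fun y => PhiEq c bσ bμ bν ξ y) η =
      groupVelocity c bμ (ξ - η) - groupVelocity c bν η := by
  have hμ' := (hasGradientAt_dispersion c hμ (ξ - η)).hasFDerivAt.comp η
    ((hasFDerivAt_id η).const_sub ξ)
  have hν' := (hasGradientAt_dispersion c hν η).hasFDerivAt
  refine HasGradientAt.gradient ?_
  rw [hasGradientAt_iff_hasFDerivAt]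
  refine ((hμ'.const_sub (LamP c bσ ξ)).sub hν').congr_fderiv ?_
  ext v
  simp

lemma inv_smul_sub_sub_inv_smul {V : Type*} [AddCommGroup V] [Module ℝ V] {bσ bμ bν : ℝ}
    (hσ : bσ ≠ 0) (hμ : bμ ≠ 0) (hν : bν ≠ 0) (hb : bσ = bμ + bν) (ξ η : V) :
    bμ⁻¹ • (ξ - η) - bν⁻¹ • η = -((bμ⁻¹ + bν⁻¹) • (η - (bν / bσ) • ξ)) := by
  have : (bμ⁻¹ + bν⁻¹) * (bν / bσ) = bμ⁻¹ := by
    rw [hb] at hσ ⊢; field_simp; ring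
  simp only [smul_sub, smul_smul, this, add_smul]
  abel

lemma norm_inv_smul_le_mul {V : Type*} [SeminormedAddCommGroup V] [NormedSpace ℝ V] {t K R : ℝ}
    (ht : 0 < t) (htK : t⁻¹ ≤ K) {v : V} (hv : ‖v‖ ≤ R) : ‖t⁻¹ • v‖ ≤ K * R := by
  rw [norm_smul, Real.norm_of_nonneg (inv_nonneg.mpr ht.le)]
  exact mul_le_mul htK hv (norm_nonneg v) ((inv_pos.mpr ht).le.trans htK)

/-- In the fully resonant equal-speed case `b_σ = b_μ + b_ν`, the size of
`∇_ηΦ(ξ,η)` is comparable to the distance `|η − ρξ|` to the resonance line,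
with weights polynomial in the frequencies. -/
theorem statement10 (c bσ bμ bν : ℝ) (hc : 0 < c)
    (hσ : 0 < bσ) (hμ : 0 < bμ) (hν : 0 < bν) (hb : bσ = bμ + bν) :
    ∃ C : ℝ, 1 ≤ C ∧ ∀ ξ η : E3,
      C⁻¹ * (1 + ‖ξ‖ + ‖η‖) ^ (-5 : ℤ) * ‖η - (bν / bσ) • ξ‖ ≤
        ‖gradient (fun y => PhiEq c bσ bμ bν ξ y) η‖ ∧
      ‖gradient (fun y => PhiEq c bσ bμ bν ξ y) η‖ ≤ C * ‖η - (bν / bσ) • ξ‖ := by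
  set K := bμ⁻¹ + bν⁻¹
  -- the weight of `norm_groupVelocity_sub_ge_of_norm_le` at `b = 1`
  set a := c ^ 2 * 1 ^ 2 / (2 * (c * K + 1) ^ 3)
  have haK : 0 < a * K := by positivity
  set C := 1 + 2 * c ^ 2 * K + (a * K)⁻¹
  refine ⟨C, by linarith [inv_pos.mpr haK, (by positivity : 0 < 2 * c ^ 2 * K)], fun ξ η => ?_⟩
  set X := 1 + ‖ξ‖ + ‖η‖
  have hX : 1 ≤ X := by linarith [norm_nonneg ξ, norm_nonneg η]
  have hx : ‖bμ⁻¹ • (ξ - η)‖ ≤ K * X :=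
    norm_inv_smul_le_mul hμ (by simp [K, hν.le]) (by linarith [norm_sub_le ξ η])
  have hy : ‖bν⁻¹ • η‖ ≤ K * X :=
    norm_inv_smul_le_mul hν (by simp [K, hμ.le]) (by linarith [norm_nonneg ξ])
  have hxy : ‖bμ⁻¹ • (ξ - η) - bν⁻¹ • η‖ = K * ‖η - (bν / bσ) • ξ‖ := by
    rw [inv_smul_sub_sub_inv_smul hσ.ne' hμ.ne' hν.ne' hb, norm_neg, norm_smul,
      Real.norm_of_nonneg (by positivity)]
  rw [gradient_phiEq c hμ.ne' hν.ne', groupVelocity_eq_inv_smul c hμ,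
    groupVelocity_eq_inv_smul c hν]
  constructor
  · have hC : C⁻¹ ≤ a * K := inv_le_of_inv_le₀ haK (by linarith [(by positivity : 0 < 2 * c ^ 2 * K)])
    have hXpow : X ^ (-5 : ℤ) ≤ X ^ (-3 : ℤ) := zpow_le_zpow_right₀ hX (by norm_num)
    calc C⁻¹ * X ^ (-5 : ℤ) * ‖η - (bν / bσ) • ξ‖
        ≤ a * K * X ^ (-3 : ℤ) * ‖η - (bν / bσ) • ξ‖ := by gcongr
      _ = a * X ^ (-3 : ℤ) * ‖bμ⁻¹ • (ξ - η) - bν⁻¹ • η‖ := by rw [hxy]; ring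
      _ ≤ _ := norm_groupVelocity_sub_ge_of_norm_le c hc.le one_pos hX hx hy
  · calc _ ≤ 2 * c ^ 2 / |1| * ‖bμ⁻¹ • (ξ - η) - bν⁻¹ • η‖ :=
          norm_groupVelocity_sub_le c one_ne_zero _ _
      _ ≤ C * ‖η - (bν / bσ) • ξ‖ := by
          rw [hxy, abs_one, div_one, ← mul_assoc]
          gcongr
          linarith [inv_pos.mpr haK]
end
end

section
/- Fix parameters (c_σ, b_σ), (c_μ, b_μ), (c_ν, b_ν) with c_σ, c_μ, c_ν > 0 and b_σ, b_μ, b_ν ∈ ℝ∖{0}, and let Φ be the associated phase. Then there exist constants C₀ ≥ 1 and c₀ > 0, depending only on the speeds and masses, such that for all ξ, η ∈ ℝ³ with |ξ| ≥ C₀ and |ξ| ≥ C₀|ξ−η|, one has |Φ(ξ,η)| + |∇_ηΦ(ξ,η)| ≥ c₀ (1 + |ξ−η|)^{−2}. -/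
/-!
Write `x = |ξ|`, `y = |η|`, `r = |ξ - η| ≤ x / C₀`, and `K, M, N` for the moduli `√(c²t² + b²)`
of the three symbols at `x, r, y`, so that `Φ = ±K ∓ M ∓ N`.
* Opposite signs of `Λ_σ` and `Λ_ν`: `|Φ| ≥ K + N - M ≳ x`.
* Equal signs and `c_σ ≠ c_ν`: `|Φ| ≥ |K - N| - M ≳ |c_σ - c_ν| x`.
* Equal signs and `c_σ = c_ν = c ≤ c_μ`: `|K - N| ≤ c r + O(1/x)` (difference of squares),
  while `M - c r ≥ b_μ² / (M + c r) ≳ (1 + r)⁻¹`; hence `|Φ| ≳ (1 + r)⁻¹`.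
* `c_σ = c_ν = c > c_μ`: the phase may vanish, but
  `∇_η Φ = ±c_μ² (ξ - η) / M ∓ c² η / N` has norm at least `c² y / N - c_μ → c - c_μ`.
Only the third case needs a decaying weight, and `(1 + r)⁻¹ ≥ (1 + r)⁻²`.
-/

noncomputable section

/-- `Λ_τ(ξ) = sgn(b_τ)·√(c_τ²|ξ|² + b_τ²)`. -/
def Lam3 (c b : ℝ) (ξ : E3) : ℝ := Real.sign b * Real.sqrt (c ^ 2 * ‖ξ‖ ^ 2 + b ^ 2)

/-- The phase `Φ(ξ,η) = Λ_σ(ξ) − Λ_μ(ξ−η) − Λ_ν(η)`. -/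
def Phi3 (cσ bσ cμ bμ cν bν : ℝ) (ξ η : E3) : ℝ :=
  Lam3 cσ bσ ξ - Lam3 cμ bμ (ξ - η) - Lam3 cν bν η

def kgSymbol (c b t : ℝ) : ℝ := Real.sqrt (c ^ 2 * t ^ 2 + b ^ 2)

section kgSymbol

variable (c b : ℝ)

lemma kgSymbol_nonneg (t : ℝ) : 0 ≤ kgSymbol c b t := Real.sqrt_nonneg _

lemma kgSymbol_sq (t : ℝ) : kgSymbol c b t ^ 2 = c ^ 2 * t ^ 2 + b ^ 2 :=
  Real.sq_sqrt (by positivity)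

lemma mul_le_kgSymbol (t : ℝ) : c * t ≤ kgSymbol c b t :=
  Real.le_sqrt_of_sq_le (by nlinarith [sq_nonneg b])

lemma abs_le_kgSymbol (t : ℝ) : |b| ≤ kgSymbol c b t :=
  Real.abs_le_sqrt (by nlinarith [sq_nonneg (c * t)])

lemma kgSymbol_pos {b : ℝ} (hb : b ≠ 0) (t : ℝ) : 0 < kgSymbol c b t :=
  (abs_pos.mpr hb).trans_le (abs_le_kgSymbol c b t)

variable {c}

lemma kgSymbol_le_mul_add_abs {t : ℝ} (hc : 0 ≤ c) (ht : 0 ≤ t) : kgSymbol c b t ≤ c * t + |b| :=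
  Real.sqrt_le_iff.mpr ⟨by positivity, by nlinarith [sq_abs b, abs_nonneg b, mul_nonneg hc ht]⟩

end kgSymbol

section kgSymbolDifferences

variable {c c' b b' x y r : ℝ}

lemma abs_sub_mul_sub_le_abs_kgSymbol_sub (hc : 0 ≤ c) (hc' : 0 ≤ c') (hx : 0 ≤ x) (hy : 0 ≤ y)
    (hxy : |x - y| ≤ r) :
    |c - c'| * x - c' * r - (|b| + |b'|) ≤ |kgSymbol c b x - kgSymbol c' b' y| := by
  have hK := mul_le_kgSymbol c b x
  have hK' := kgSymbol_le_mul_add_abs b hc hx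
  have hN := mul_le_kgSymbol c' b' y
  have hN' := kgSymbol_le_mul_add_abs b' hc' hy
  have hr₁ : c' * (x - y) ≤ c' * r := mul_le_mul_of_nonneg_left (le_of_abs_le hxy) hc'
  have hr₂ : c' * (y - x) ≤ c' * r :=
    mul_le_mul_of_nonneg_left (le_of_abs_le ((abs_sub_comm y x).le.trans hxy)) hc'
  have := le_abs_self (kgSymbol c b x - kgSymbol c' b' y)
  have := neg_abs_le (kgSymbol c b x - kgSymbol c' b' y)
  rcases abs_cases (c - c') with ⟨h, _⟩ | ⟨h, _⟩ <;> rw [h] <;>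
    nlinarith [abs_nonneg b, abs_nonneg b']

lemma abs_kgSymbol_sub_kgSymbol_le (hc : 0 < c) (hx : 0 < x) (hy : 0 ≤ y) (hxy : |x - y| ≤ r) :
    |kgSymbol c b x - kgSymbol c b' y| ≤ c * r + |b ^ 2 - b' ^ 2| / (c * x) := by
  set K := kgSymbol c b x
  set N := kgSymbol c b' y
  have hsum : c * (x + y) ≤ K + N := by
    linarith [mul_le_kgSymbol c b x, mul_le_kgSymbol c b' y]
  have hpos : 0 < K + N := by nlinarith
  have hr : 0 ≤ r := (abs_nonneg _).trans hxy
  have hdiff : (K - N) * (K + N) = c ^ 2 * (x - y) * (x + y) + (b ^ 2 - b' ^ 2) := by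
    linear_combination kgSymbol_sq c b x - kgSymbol_sq c b' y
  calc |K - N| = |c ^ 2 * (x - y) * (x + y) + (b ^ 2 - b' ^ 2)| / (K + N) := by
        rw [← hdiff, abs_mul, abs_of_pos hpos, mul_div_cancel_right₀ _ hpos.ne']
    _ ≤ (c ^ 2 * r * (x + y) + |b ^ 2 - b' ^ 2|) / (K + N) := by
        gcongr
        refine (abs_add_le _ _).trans (add_le_add_left ?_ _)
        rw [abs_mul, abs_mul, abs_of_nonneg (by positivity : (0 : ℝ) ≤ c ^ 2),
          abs_of_nonneg (by positivity : 0 ≤ x + y)]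
        gcongr
    _ = c * r * (c * (x + y)) / (K + N) + |b ^ 2 - b' ^ 2| / (K + N) := by ring
    _ ≤ c * r + |b ^ 2 - b' ^ 2| / (c * x) := by
        gcongr
        · rw [div_le_iff₀ hpos]; gcongr
        · nlinarith

lemma mul_add_div_le_kgSymbol (hc : 0 ≤ c) (hcc' : c ≤ c') (hb : b ≠ 0) (hr : 0 ≤ r) :
    c * r + b ^ 2 / (2 * (c' + |b|)) / (1 + r) ≤ kgSymbol c' b r := by
  have hM := kgSymbol_sq c' b r
  have hMlb := mul_le_kgSymbol c' b r
  have hMub := kgSymbol_le_mul_add_abs b (hc.trans hcc') hr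
  have hcr : c * r ≤ c' * r := mul_le_mul_of_nonneg_right hcc' hr
  have hsq : (c * r) ^ 2 ≤ (c' * r) ^ 2 := pow_le_pow_left₀ (by positivity) hcr 2
  have hsum : kgSymbol c' b r + c * r ≤ 2 * (c' + |b|) * (1 + r) := by
    nlinarith [abs_nonneg b, mul_nonneg (hc.trans hcc') hr]
  have hpos : 0 < 2 * (c' + |b|) * (1 + r) := by
    have := abs_pos.mpr hb
    have := hc.trans hcc'
    positivity
  rw [div_div, ← le_sub_iff_add_le', div_le_iff₀ hpos]
  nlinarith [mul_le_mul_of_nonneg_left hsum (sub_nonneg.mpr (hcr.trans hMlb))]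

lemma sub_div_le_sq_mul_div_kgSymbol (hc : 0 < c) (hx : 0 < x) :
    c - |b| / x ≤ c ^ 2 * x / kgSymbol c b x := by
  have hN := kgSymbol_le_mul_add_abs b hc.le hx.le
  have h₁ : |b| / x * (c * x) ≤ |b| / x * kgSymbol c b x :=
    mul_le_mul_of_nonneg_left (mul_le_kgSymbol c b x) (by positivity)
  have h₂ : |b| / x * (c * x) = c * |b| := by field_simp
  rw [le_div_iff₀ (by nlinarith [mul_le_kgSymbol c b x, mul_pos hc hx])]
  nlinarith [mul_le_mul_of_nonneg_left hN hc.le]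

end kgSymbolDifferences

lemma Real.abs_sign_of_ne_zero {b : ℝ} (hb : b ≠ 0) : |Real.sign b| = 1 := by
  rcases Real.sign_apply_eq_of_ne_zero b hb with h | h <;> simp [h]

lemma abs_abs_sub_abs_le_abs_sign_mul_sub {a b : ℝ} (ha : a ≠ 0) (hb : b ≠ 0) (x y : ℝ) :
    |(|x| - |y|)| ≤ |Real.sign a * x - Real.sign b * y| := by
  simpa only [abs_mul, Real.abs_sign_of_ne_zero ha, Real.abs_sign_of_ne_zero hb, one_mul] using
    abs_abs_sub_abs_le_abs_sub (Real.sign a * x) (Real.sign b * y)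

section Phase

variable {cσ bσ cμ bμ cν bν : ℝ}

lemma Lam3_eq (c b : ℝ) (ξ : E3) : Lam3 c b ξ = Real.sign b * kgSymbol c b ‖ξ‖ := rfl

lemma abs_abs_kgSymbol_sub_sub_le_abs_Phi3 (hbσ : bσ ≠ 0) (hbμ : bμ ≠ 0)
    (hs : Real.sign bσ = Real.sign bν) (ξ η : E3) :
    |(|kgSymbol cσ bσ ‖ξ‖ - kgSymbol cν bν ‖η‖| - kgSymbol cμ bμ ‖ξ - η‖)|
      ≤ |Phi3 cσ bσ cμ bμ cν bν ξ η| := by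
  have h := abs_abs_sub_abs_le_abs_sign_mul_sub hbσ hbμ
    (kgSymbol cσ bσ ‖ξ‖ - kgSymbol cν bν ‖η‖) (kgSymbol cμ bμ ‖ξ - η‖)
  rw [abs_of_nonneg (kgSymbol_nonneg _ _ _)] at h
  convert h using 2
  simp only [Phi3, Lam3_eq, ← hs]
  ring

lemma kgSymbol_add_sub_le_abs_Phi3 (hbσ : bσ ≠ 0) (hbμ : bμ ≠ 0) (hbν : bν ≠ 0)
    (hs : Real.sign bσ ≠ Real.sign bν) (ξ η : E3) :
    kgSymbol cσ bσ ‖ξ‖ + kgSymbol cν bν ‖η‖ - kgSymbol cμ bμ ‖ξ - η‖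
      ≤ |Phi3 cσ bσ cμ bμ cν bν ξ η| := by
  have hνσ : Real.sign bν = -Real.sign bσ := by
    rcases Real.sign_apply_eq_of_ne_zero bσ hbσ with h | h <;>
    rcases Real.sign_apply_eq_of_ne_zero bν hbν with h' | h' <;> simp_all
  have h := abs_abs_sub_abs_le_abs_sign_mul_sub hbσ hbμ
    (kgSymbol cσ bσ ‖ξ‖ + kgSymbol cν bν ‖η‖) (kgSymbol cμ bμ ‖ξ - η‖)
  rw [abs_of_nonneg (kgSymbol_nonneg _ _ _),
    abs_of_nonneg (add_nonneg (kgSymbol_nonneg _ _ _) (kgSymbol_nonneg _ _ _))] at h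
  refine (le_abs_self _).trans (h.trans_eq ?_)
  simp only [Phi3, Lam3_eq, hνσ]
  ring_nf

end Phase

section Gradient

variable {F : Type*} [NormedAddCommGroup F] [InnerProductSpace ℝ F] [CompleteSpace F]

lemma hasGradientAt_kgSymbol_norm (c : ℝ) {b : ℝ} (hb : b ≠ 0) (z : F) :
    HasGradientAt (fun y : F => kgSymbol c b ‖y‖) ((c ^ 2 / kgSymbol c b ‖z‖) • z) z := by
  have h := (((hasStrictFDerivAt_norm_sq z).hasFDerivAt.const_mul (c ^ 2)).add_const
    (b ^ 2)).sqrt (by positivity)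
  refine hasGradientAt_iff_hasFDerivAt.mpr (h.congr_fderiv ?_)
  ext u
  simp only [kgSymbol, InnerProductSpace.toDual_apply_apply, map_smul, smul_apply,
    innerSL_apply_apply, smul_eq_mul, nsmul_eq_mul, Nat.cast_ofNat]
  field_simp

variable {cσ bσ cμ bμ cν bν : ℝ}

lemma hasGradientAt_Phi3 (hbμ : bμ ≠ 0) (hbν : bν ≠ 0) (ξ η : E3) :
    HasGradientAt (fun y => Phi3 cσ bσ cμ bμ cν bν ξ y)
      ((Real.sign bμ * (cμ ^ 2 / kgSymbol cμ bμ ‖ξ - η‖)) • (ξ - η)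
        - (Real.sign bν * (cν ^ 2 / kgSymbol cν bν ‖η‖)) • η) η := by
  have hμ := (hasGradientAt_kgSymbol_norm cμ hbμ (ξ - η)).hasFDerivAt.comp η
    ((hasFDerivAt_id η).const_sub ξ)
  have hν := (hasGradientAt_kgSymbol_norm cν hbν η).hasFDerivAt
  refine hasGradientAt_iff_hasFDerivAt.mpr
    (((hasFDerivAt_const (Lam3 cσ bσ ξ) η).sub (hμ.const_mul (Real.sign bμ))).sub
      (hν.const_mul (Real.sign bν)) |>.congr_fderiv ?_)
  ext u
  simp only [map_smul, map_sub, ContinuousLinearMap.comp_neg, ContinuousLinearMap.comp_id,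
    smul_neg, sub_neg_eq_add, zero_add, sub_apply, smul_apply,
    InnerProductSpace.toDual_apply_apply, smul_eq_mul]
  ring

lemma sq_mul_div_kgSymbol_sub_le_norm_gradient_Phi3 (hcμ : 0 ≤ cμ) (hbμ : bμ ≠ 0)
    (hbν : bν ≠ 0) (ξ η : E3) :
    cν ^ 2 * ‖η‖ / kgSymbol cν bν ‖η‖ - cμ
      ≤ ‖gradient (fun y => Phi3 cσ bσ cμ bμ cν bν ξ y) η‖ := by
  have hM := kgSymbol_pos cμ hbμ ‖ξ - η‖
  have hN := kgSymbol_pos cν hbν ‖η‖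
  have hμ : cμ ^ 2 / kgSymbol cμ bμ ‖ξ - η‖ * ‖ξ - η‖ ≤ cμ := by
    rw [div_mul_eq_mul_div, div_le_iff₀ hM, sq, mul_assoc]
    exact mul_le_mul_of_nonneg_left (mul_le_kgSymbol cμ bμ ‖ξ - η‖) hcμ
  rw [(hasGradientAt_Phi3 hbμ hbν ξ η).gradient, norm_sub_rev]
  refine le_trans ?_ (norm_sub_norm_le _ _)
  simp only [norm_smul, Real.norm_eq_abs, abs_mul, Real.abs_sign_of_ne_zero hbμ,
    Real.abs_sign_of_ne_zero hbν, abs_div, abs_of_pos hM, abs_of_pos hN, abs_sq, one_mul]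
  rw [mul_div_right_comm]
  linarith

end Gradient

lemma one_le_mul_sub_mul_sub_of_le {a b k x r : ℝ} (ha : 0 < a) (hb : 0 ≤ b) (hk : 0 ≤ k)
    (hr : 0 ≤ r) (hx : 1 + 2 * b / a + 2 * (k + 1) / a ≤ x)
    (hxr : (1 + 2 * b / a + 2 * (k + 1) / a) * r ≤ x) :
    1 ≤ a * x - b * r - k := by
  have hb' : 0 ≤ 2 * b / a := by positivity
  have hk' : 0 ≤ 2 * (k + 1) / a := by positivity
  have h₁ : 2 * b / a * r ≤ x := by nlinarith
  have h₂ : 2 * (k + 1) / a ≤ x := by linarith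
  rw [div_mul_eq_mul_div, div_le_iff₀ ha] at h₁
  rw [div_le_iff₀ ha] at h₂
  linarith

def HighOutputNonresonance (cσ bσ cμ bμ cν bν : ℝ) (w : ℝ → ℝ) : Prop :=
  ∃ C₀ : ℝ, 1 ≤ C₀ ∧ ∃ c₀ : ℝ, 0 < c₀ ∧
    ∀ ξ η : E3, C₀ ≤ ‖ξ‖ → C₀ * ‖ξ - η‖ ≤ ‖ξ‖ →
      c₀ * w ‖ξ - η‖ ≤
        |Phi3 cσ bσ cμ bμ cν bν ξ η| + ‖gradient (fun y => Phi3 cσ bσ cμ bμ cν bν ξ y) η‖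

namespace HighOutputNonresonance

variable {cσ bσ cμ bμ cν bν : ℝ}

lemma mono {w w' : ℝ → ℝ} (h : HighOutputNonresonance cσ bσ cμ bμ cν bν w)
    (hw : ∀ r, 0 ≤ r → w' r ≤ w r) : HighOutputNonresonance cσ bσ cμ bμ cν bν w' := by
  obtain ⟨C₀, hC₀, c₀, hc₀, hbound⟩ := h
  exact ⟨C₀, hC₀, c₀, hc₀, fun ξ η hξ hξη =>
    (mul_le_mul_of_nonneg_left (hw _ (norm_nonneg _)) hc₀.le).trans (hbound ξ η hξ hξη)⟩

lemma of_linear_le_abs_Phi3 {a b k : ℝ} (ha : 0 < a) (hb : 0 ≤ b) (hk : 0 ≤ k)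
    (h : ∀ ξ η : E3, a * ‖ξ‖ - b * ‖ξ - η‖ - k ≤ |Phi3 cσ bσ cμ bμ cν bν ξ η|) :
    HighOutputNonresonance cσ bσ cμ bμ cν bν (fun _ => 1) := by
  have hC₀ : 0 ≤ 2 * b / a + 2 * (k + 1) / a := by positivity
  refine ⟨1 + 2 * b / a + 2 * (k + 1) / a, by linarith, 1, one_pos, fun ξ η hξ hξη => ?_⟩
  have := one_le_mul_sub_mul_sub_of_le ha hb hk (norm_nonneg _) hξ hξη
  linarith [h ξ η, norm_nonneg (gradient (fun y => Phi3 cσ bσ cμ bμ cν bν ξ y) η)]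

lemma of_sign_ne (hcσ : 0 < cσ) (hcμ : 0 ≤ cμ) (hbσ : bσ ≠ 0) (hbμ : bμ ≠ 0) (hbν : bν ≠ 0)
    (hs : Real.sign bσ ≠ Real.sign bν) :
    HighOutputNonresonance cσ bσ cμ bμ cν bν (fun _ => 1) :=
  of_linear_le_abs_Phi3 hcσ hcμ (abs_nonneg bμ) fun ξ η => by
    linarith [kgSymbol_add_sub_le_abs_Phi3 (cσ := cσ) (cμ := cμ) (cν := cν) hbσ hbμ hbν hs ξ η,
      mul_le_kgSymbol cσ bσ ‖ξ‖, kgSymbol_nonneg cν bν ‖η‖,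
      kgSymbol_le_mul_add_abs bμ hcμ (norm_nonneg (ξ - η))]

lemma of_speed_ne (hcσ : 0 ≤ cσ) (hcμ : 0 ≤ cμ) (hcν : 0 ≤ cν) (hbσ : bσ ≠ 0) (hbμ : bμ ≠ 0)
    (hs : Real.sign bσ = Real.sign bν) (hc : cσ ≠ cν) :
    HighOutputNonresonance cσ bσ cμ bμ cν bν (fun _ => 1) :=
  of_linear_le_abs_Phi3 (abs_pos.mpr (sub_ne_zero.mpr hc)) (add_nonneg hcν hcμ)
    (by positivity : 0 ≤ |bσ| + |bν| + |bμ|) fun ξ η => by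
    have hK := abs_sub_mul_sub_le_abs_kgSymbol_sub (b := bσ) (b' := bν) hcσ hcν (norm_nonneg ξ)
      (norm_nonneg η) (abs_norm_sub_norm_le ξ η)
    have hΦ := abs_abs_kgSymbol_sub_sub_le_abs_Phi3 (cσ := cσ) (cμ := cμ) (cν := cν) hbσ hbμ hs ξ η
    linarith [le_abs_self (|kgSymbol cσ bσ ‖ξ‖ - kgSymbol cν bν ‖η‖| - kgSymbol cμ bμ ‖ξ - η‖),
      kgSymbol_le_mul_add_abs bμ hcμ (norm_nonneg (ξ - η))]

lemma of_speed_eq_of_lt {c : ℝ} (hcμ : 0 ≤ cμ) (hc : cμ < c) (hbμ : bμ ≠ 0) (hbν : bν ≠ 0) :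
    HighOutputNonresonance c bσ cμ bμ c bν (fun _ => 1) := by
  have hδ : 0 < c - cμ := sub_pos.mpr hc
  set L := 2 * |bν| / (c - cμ)
  have hL : 0 ≤ L := by positivity
  refine ⟨2 + 2 * L, by linarith, (c - cμ) / 2, by positivity, fun ξ η hξ hξη => ?_⟩
  have hr : 2 * ‖ξ - η‖ ≤ ‖ξ‖ := by nlinarith [norm_nonneg (ξ - η)]
  have hy : 1 + L ≤ ‖η‖ := by linarith [norm_sub_norm_le ξ η]
  have hy₀ : 0 < ‖η‖ := by linarith
  have hbν_le : |bν| / ‖η‖ ≤ (c - cμ) / 2 := by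
    have hLδ : L * (c - cμ) = 2 * |bν| := div_mul_cancel₀ _ hδ.ne'
    rw [div_le_iff₀ hy₀]
    nlinarith
  beta_reduce
  linarith [sub_div_le_sq_mul_div_kgSymbol (b := bν) (hcμ.trans_lt hc) hy₀,
    sq_mul_div_kgSymbol_sub_le_norm_gradient_Phi3 (cσ := c) (bσ := bσ) (cν := c) hcμ hbμ hbν ξ η,
    abs_nonneg (Phi3 c bσ cμ bμ c bν ξ η)]

lemma of_speed_eq_of_le {c : ℝ} (hc : 0 < c) (hcμ : c ≤ cμ) (hbσ : bσ ≠ 0) (hbμ : bμ ≠ 0)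
    (hs : Real.sign bσ = Real.sign bν) :
    HighOutputNonresonance c bσ cμ bμ c bν (fun r => (1 + r)⁻¹) := by
  set β := bμ ^ 2 / (2 * (cμ + |bμ|))
  set D := |bσ ^ 2 - bν ^ 2|
  have hβ : 0 < β := by
    have := abs_pos.mpr hbμ
    have := hc.trans_le hcμ
    positivity
  have hC₀ : 0 ≤ 4 * D / (c * β) := by positivity
  refine ⟨1 + 4 * D / (c * β), by linarith, β / 2, by positivity, fun ξ η hξ hξη => ?_⟩
  have hx : 0 < ‖ξ‖ := by linarith
  have hr := norm_nonneg (ξ - η)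
  have hM := mul_add_div_le_kgSymbol hc.le hcμ hbμ hr
  have hKN := abs_kgSymbol_sub_kgSymbol_le (b := bσ) (b' := bν) hc hx (norm_nonneg η)
    (abs_norm_sub_norm_le ξ η)
  have hΦ := abs_abs_kgSymbol_sub_sub_le_abs_Phi3 (cσ := c) (cμ := cμ) (cν := c) hbσ hbμ hs ξ η
  -- `C₀ (1 + r) ≤ 2 |ξ|` makes the `O(1/|ξ|)` error in `|K - N|` at most half of `β / (1 + r)`
  have hD : D / (c * ‖ξ‖) ≤ β / 2 / (1 + ‖ξ - η‖) := by
    rw [div_le_div_iff₀ (by positivity) (by positivity)]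
    have h₁ : 4 * D / (c * β) * (1 + ‖ξ - η‖) ≤ 2 * ‖ξ‖ := by nlinarith
    rw [div_mul_eq_mul_div, div_le_iff₀ (by positivity)] at h₁
    nlinarith
  have hsplit : β / (1 + ‖ξ - η‖) = 2 * (β / 2 / (1 + ‖ξ - η‖)) := by ring
  rw [← div_eq_mul_inv]
  linarith [neg_abs_le (|kgSymbol c bσ ‖ξ‖ - kgSymbol c bν ‖η‖| - kgSymbol cμ bμ ‖ξ - η‖),
    norm_nonneg (gradient (fun y => Phi3 c bσ cμ bμ c bν ξ y) η)]

end HighOutputNonresonance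

/-- High output frequency non-resonance: if the output frequency is large and
much larger than one input frequency, then `|Φ| + |∇_ηΦ| ≳ (1+|ξ−η|)^{−2}`. -/
theorem statement14 (cσ bσ cμ bμ cν bν : ℝ)
    (hcσ : 0 < cσ) (hcμ : 0 < cμ) (hcν : 0 < cν)
    (hbσ : bσ ≠ 0) (hbμ : bμ ≠ 0) (hbν : bν ≠ 0) :
    ∃ C₀ : ℝ, 1 ≤ C₀ ∧ ∃ c₀ : ℝ, 0 < c₀ ∧
      ∀ ξ η : E3, C₀ ≤ ‖ξ‖ → C₀ * ‖ξ - η‖ ≤ ‖ξ‖ →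
        c₀ * (1 + ‖ξ - η‖) ^ (-2 : ℤ) ≤
          |Phi3 cσ bσ cμ bμ cν bν ξ η| +
            ‖gradient (fun y => Phi3 cσ bσ cμ bμ cν bν ξ y) η‖ := by
  have hinv_le_one : ∀ r : ℝ, 0 ≤ r → (1 + r)⁻¹ ≤ 1 := fun r hr =>
    inv_le_one_of_one_le₀ (by linarith)
  have hzpow_le_inv : ∀ r : ℝ, 0 ≤ r → (1 + r) ^ (-2 : ℤ) ≤ (1 + r)⁻¹ := fun r hr => by
    rw [← zpow_neg_one]
    exact zpow_le_zpow_right₀ (by linarith) (by norm_num)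
  suffices h : HighOutputNonresonance cσ bσ cμ bμ cν bν (fun r => (1 + r)⁻¹) from
    h.mono hzpow_le_inv
  by_cases hs : Real.sign bσ = Real.sign bν
  · by_cases hc : cσ = cν
    · subst hc
      rcases le_or_gt cσ cμ with hle | hlt
      · exact HighOutputNonresonance.of_speed_eq_of_le hcσ hle hbσ hbμ hs
      · exact (HighOutputNonresonance.of_speed_eq_of_lt hcμ.le hlt hbμ hbν).mono hinv_le_one
    · exact (HighOutputNonresonance.of_speed_ne hcσ.le hcμ.le hcν.le hbσ hbμ hs hc).mono
        hinv_le_one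
  · exact (HighOutputNonresonance.of_sign_ne hcσ hcμ.le hbσ hbμ hbν hs).mono hinv_le_one
end
end

section
/- Let c_σ, c_μ, c_ν be pairwise distinct positive real numbers. Define b_σ = c_ν^{−2} − c_μ^{−2}, b_μ = c_ν^{−2} − c_σ^{−2}, b_ν = c_σ^{−2} − c_μ^{−2}, and the coefficients σ₂₀ = c_σ⁴/(8 b_σ³), σ₂₁ = −c_μ⁴/(8 b_μ³), σ₂₂ = −c_ν⁴/(8 b_ν³) (which are well defined since the b's are nonzero). Then for every v ∈ ℝ³: σ₂₀ |(c_ν² − c_μ²) v|⁴ + σ₂₁ |(c_ν² − c_σ²) v|⁴ + σ₂₂ |(c_σ² − c_μ²) v|⁴ = λ |v|⁴, where λ = −(1/8)(c_σ c_μ c_ν)⁴ (c_σ² − c_μ²)(c_μ² − c_ν²)(c_ν² − c_σ²), and in particular λ ≠ 0. -/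
noncomputable section

/-- Nondegeneracy at fourth order of the Klein–Gordon phase along the fully
degenerate low-frequency resonance direction, for pairwise distinct speeds. -/
theorem statement18 (cσ cμ cν : ℝ)
    (hcσ : 0 < cσ) (hcμ : 0 < cμ) (hcν : 0 < cν)
    (h1 : cσ ≠ cμ) (h2 : cμ ≠ cν) (h3 : cν ≠ cσ) :
    (∀ v : E3,
      cσ ^ 4 / (8 * (cν⁻¹ ^ 2 - cμ⁻¹ ^ 2) ^ 3) * ‖(cν ^ 2 - cμ ^ 2) • v‖ ^ 4 +
        (-(cμ ^ 4 / (8 * (cν⁻¹ ^ 2 - cσ⁻¹ ^ 2) ^ 3))) * ‖(cν ^ 2 - cσ ^ 2) • v‖ ^ 4 +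
        (-(cν ^ 4 / (8 * (cσ⁻¹ ^ 2 - cμ⁻¹ ^ 2) ^ 3))) * ‖(cσ ^ 2 - cμ ^ 2) • v‖ ^ 4 =
      (-(1 / 8) * (cσ * cμ * cν) ^ 4 *
          (cσ ^ 2 - cμ ^ 2) * (cμ ^ 2 - cν ^ 2) * (cν ^ 2 - cσ ^ 2)) * ‖v‖ ^ 4) ∧
    (-(1 / 8) * (cσ * cμ * cν) ^ 4 *
        (cσ ^ 2 - cμ ^ 2) * (cμ ^ 2 - cν ^ 2) * (cν ^ 2 - cσ ^ 2)) ≠ 0 := by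
  have hσ := hcσ.ne'
  have hμ := hcμ.ne'
  have hν := hcν.ne'
  have hsσμ : cσ ^ 2 ≠ cμ ^ 2 := fun h => h1 (by nlinarith)
  have hsμν : cμ ^ 2 ≠ cν ^ 2 := fun h => h2 (by nlinarith)
  have hsνσ : cν ^ 2 ≠ cσ ^ 2 := fun h => h3 (by nlinarith)
  have hb1 : cν⁻¹ ^ 2 - cμ⁻¹ ^ 2 ≠ 0 := by
    rw [sub_ne_zero]
    intro h
    apply hsμν
    field_simp at h
    nlinarith
  have hb2 : cν⁻¹ ^ 2 - cσ⁻¹ ^ 2 ≠ 0 := by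
    rw [sub_ne_zero]
    intro h
    apply hsνσ
    field_simp at h
    nlinarith
  have hb3 : cσ⁻¹ ^ 2 - cμ⁻¹ ^ 2 ≠ 0 := by
    rw [sub_ne_zero]
    intro h
    apply hsσμ
    field_simp at h
    nlinarith
  constructor
  · intro v
    have key : ∀ a : ℝ, ‖a • v‖ ^ 4 = a ^ 4 * ‖v‖ ^ 4 := by
      intro a
      rw [norm_smul, Real.norm_eq_abs]
      have : |a| ^ 4 = a ^ 4 := by
        rw [← abs_pow, abs_eq_self]
        positivity
      rw [mul_pow, this]
    have d1 : cμ ^ 2 - cν ^ 2 ≠ 0 := sub_ne_zero.mpr hsμν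
    have d2 : cσ ^ 2 - cν ^ 2 ≠ 0 := sub_ne_zero.mpr (fun h => hsνσ h.symm)
    have d3 : cσ ^ 2 - cμ ^ 2 ≠ 0 := sub_ne_zero.mpr hsσμ
    have e1 : cν⁻¹ ^ 2 - cμ⁻¹ ^ 2 = (cμ ^ 2 - cν ^ 2) / (cν ^ 2 * cμ ^ 2) := by
      field_simp
    have e2 : cν⁻¹ ^ 2 - cσ⁻¹ ^ 2 = (cσ ^ 2 - cν ^ 2) / (cν ^ 2 * cσ ^ 2) := by
      field_simp
    have e3 : cσ⁻¹ ^ 2 - cμ⁻¹ ^ 2 = (cμ ^ 2 - cσ ^ 2) / (cσ ^ 2 * cμ ^ 2) := by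
      field_simp
    rw [key, key, key, e1, e2, e3]
    have d3' : cμ ^ 2 - cσ ^ 2 ≠ 0 := fun h => d3 (by linarith)
    field_simp [d1, d2, d3']
    ring
  · intro h
    rcases mul_eq_zero.mp h with h | h
    · rcases mul_eq_zero.mp h with h | h
      · rcases mul_eq_zero.mp h with h | h
        · rcases mul_eq_zero.mp h with h | h
          · norm_num at h
          · exact (pow_ne_zero 4 (by positivity : cσ * cμ * cν ≠ 0)) h
        · exact hsσμ (sub_eq_zero.mp h)
      · exact hsμν (sub_eq_zero.mp h)
    · exact hsνσ (sub_eq_zero.mp h)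
end
end
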